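/- arXiv:math/0702773 — 14 statements merged into one kernel-verified Lean document; each statement's English description precedes it below -/
import Mathlib

section
/- If a real polynomial P(X₁,...,Xₙ) sign represents the parity function over {0,1}ⁿ (i.e., P(a) > 0 when Σaᵢ is even and P(a) < 0 when Σaᵢ is odd), and P is multilinear, then P has exactly 2ⁿ nonzero monomials. -/
open MvPolynomial

/-- `P` sign represents the parity function over `A^n`. -/
def SignRepParity (n : ℕ) (A : Finset ℕ) (P : MvPolynomial (Fin n) ℝ) : Prop :=
  ∀ a : Fin n → ℕ, (∀ i, a i ∈ A) →
    (Even (∑ i, a i) → 0 < MvPolynomial.eval (fun i => (a i : ℝ)) P) ∧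
    (Odd (∑ i, a i) → MvPolynomial.eval (fun i => (a i : ℝ)) P < 0)

/-- The 0/1 monomial exponent vector with support `S`. -/
def indF (n : ℕ) (S : Finset (Fin n)) : Fin n →₀ ℕ :=
  ⟨S, fun i => if i ∈ S then 1 else 0, by intro a; by_cases h : a ∈ S <;> simp [h]⟩

lemma indF_apply {n : ℕ} (S : Finset (Fin n)) (i : Fin n) :
    indF n S i = if i ∈ S then 1 else 0 := rfl

lemma indF_support {n : ℕ} (S : Finset (Fin n)) : (indF n S).support = S := rfl

lemma eq_indF {n : ℕ} {P : MvPolynomial (Fin n) ℝ}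
    (hml : ∀ m ∈ P.support, ∀ i, m i ≤ 1) {m : Fin n →₀ ℕ} (hm : m ∈ P.support)
    {S : Finset (Fin n)} (hS : m.support = S) : m = indF n S := by
  ext i
  rw [indF_apply]
  by_cases hi : i ∈ S
  · rw [if_pos hi]
    have h1 := hml m hm i
    have h2 : m i ≠ 0 := Finsupp.mem_support_iff.mp (hS ▸ hi)
    omega
  · rw [if_neg hi]
    by_contra h
    exact hi (hS ▸ Finsupp.mem_support_iff.mpr h)

lemma eval_ind {n : ℕ} (P : MvPolynomial (Fin n) ℝ) (T : Finset (Fin n)) :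
    eval (fun i => if i ∈ T then (1 : ℝ) else 0) P
      = ∑ m ∈ P.support.filter (fun m => m.support ⊆ T), coeff m P := by
  rw [eval_eq, Finset.sum_filter]
  refine Finset.sum_congr rfl fun m hm => ?_
  by_cases h : m.support ⊆ T
  · rw [if_pos h]
    have h1 : ∀ i ∈ m.support, (if i ∈ T then (1 : ℝ) else 0) ^ m i = 1 := by
      intro i hi; rw [if_pos (h hi), one_pow]
    rw [Finset.prod_congr rfl h1, Finset.prod_const_one, mul_one]
  · rw [if_neg h]
    obtain ⟨i, hi, hiT⟩ := Finset.not_subset.mp h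
    have h0 : (if i ∈ T then (1 : ℝ) else 0) ^ m i = 0 := by
      rw [if_neg hiT]; exact zero_pow (Finsupp.mem_support_iff.mp hi)
    rw [Finset.prod_eq_zero hi h0, mul_zero]

lemma sign_eval {n : ℕ} (P : MvPolynomial (Fin n) ℝ) (hrep : SignRepParity n {0, 1} P)
    (T : Finset (Fin n)) :
    0 < (-1 : ℝ) ^ T.card * eval (fun i => if i ∈ T then (1 : ℝ) else 0) P := by
  have h := hrep (fun i => if i ∈ T then 1 else 0)
    (by intro i; by_cases hi : i ∈ T <;> simp [hi])
  have hsum : (∑ i, if i ∈ T then 1 else 0) = T.card := by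
    simp [Finset.sum_ite_mem]
  have hcast : (fun i => (((if i ∈ T then 1 else 0 : ℕ) : ℝ))) =
      fun i => if i ∈ T then (1 : ℝ) else 0 := by
    funext i; by_cases hi : i ∈ T <;> simp [hi]
  rw [hcast, hsum] at h
  rcases Nat.even_or_odd T.card with he | ho
  · have h1 := h.1 he
    rw [he.neg_one_pow]
    linarith
  · have h1 := h.2 ho
    rw [ho.neg_one_pow]
    nlinarith
  
lemma mobius_inner {n : ℕ} (S A : Finset (Fin n)) (hA : A ⊆ S) :
    ∑ T ∈ S.powerset.filter (fun T => A ⊆ T), (-1 : ℝ) ^ (S.card + T.card)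
      = if A = S then 1 else 0 := by
  have key : ∑ T ∈ S.powerset.filter (fun T => A ⊆ T), (-1 : ℝ) ^ (S.card + T.card)
      = ∑ U ∈ (S \ A).powerset, (-1 : ℝ) ^ (S.card + (A.card + U.card)) := by
    refine Finset.sum_bij' (fun T _ => T \ A) (fun U _ => A ∪ U) ?_ ?_ ?_ ?_ ?_
    · intro T hT
      rw [Finset.mem_filter, Finset.mem_powerset] at hT
      exact Finset.mem_powerset.mpr (Finset.sdiff_subset_sdiff hT.1 le_rfl)
    · intro U hU
      rw [Finset.mem_powerset] at hU
      rw [Finset.mem_filter, Finset.mem_powerset]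
      exact ⟨Finset.union_subset hA (hU.trans (Finset.sdiff_subset)), Finset.subset_union_left⟩
    · intro T hT
      rw [Finset.mem_filter] at hT
      exact Finset.union_sdiff_of_subset hT.2
    · intro U hU
      rw [Finset.mem_powerset] at hU
      show (A ∪ U) \ A = U
      rw [Finset.union_sdiff_cancel_left]
      exact Finset.disjoint_of_subset_right hU Finset.disjoint_sdiff
    · intro T hT
      rw [Finset.mem_filter] at hT
      congr 2
      have hdisj : Disjoint A (T \ A) := Finset.disjoint_sdiff
      have : A ∪ (T \ A) = T := Finset.union_sdiff_of_subset hT.2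
      calc T.card = (A ∪ (T \ A)).card := by rw [this]
        _ = A.card + (T \ A).card := Finset.card_union_of_disjoint hdisj
  rw [key]
  have : ∀ U ∈ (S \ A).powerset,
      (-1 : ℝ) ^ (S.card + (A.card + U.card)) = (-1 : ℝ) ^ (S.card + A.card) * (-1) ^ U.card := by
    intro U _; rw [← pow_add]; ring_nf
  rw [Finset.sum_congr rfl this, ← Finset.mul_sum]
  have hz : ∑ U ∈ (S \ A).powerset, (-1 : ℝ) ^ U.card
      = if S \ A = ∅ then 1 else 0 := by
    have := Finset.sum_powerset_neg_one_pow_card (x := S \ A)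
    calc ∑ U ∈ (S \ A).powerset, (-1 : ℝ) ^ U.card
        = ((∑ U ∈ (S \ A).powerset, (-1 : ℤ) ^ U.card : ℤ) : ℝ) := by push_cast; rfl
      _ = _ := by rw [this]; split <;> norm_num
  rw [hz]
  by_cases h : A = S
  · subst h
    rw [if_pos (Finset.sdiff_self A), if_pos rfl, mul_one, ← two_mul, pow_mul]
    norm_num
  · rw [if_neg h, if_neg, mul_zero]
    intro hc
    exact h (Finset.Subset.antisymm hA (Finset.sdiff_eq_empty_iff_subset.mp hc))

lemma coeff_ind {n : ℕ} (P : MvPolynomial (Fin n) ℝ)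
    (hml : ∀ m ∈ P.support, ∀ i, m i ≤ 1) (S : Finset (Fin n)) :
    coeff (indF n S) P
      = ∑ T ∈ S.powerset,
          (-1 : ℝ) ^ (S.card + T.card) * eval (fun i => if i ∈ T then (1 : ℝ) else 0) P := by
  have step1 : ∀ T ∈ S.powerset,
      (-1 : ℝ) ^ (S.card + T.card) * eval (fun i => if i ∈ T then (1 : ℝ) else 0) P
        = ∑ m ∈ P.support, if m.support ⊆ T then (-1 : ℝ) ^ (S.card + T.card) * coeff m P
            else 0 := by
    intro T _
    rw [eval_ind, Finset.mul_sum, Finset.sum_filter]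
  rw [Finset.sum_congr rfl step1, Finset.sum_comm]
  have step2 : ∀ m ∈ P.support,
      (∑ T ∈ S.powerset, if m.support ⊆ T then (-1 : ℝ) ^ (S.card + T.card) * coeff m P else 0)
        = (if m.support = S then 1 else 0) * coeff m P := by
    intro m _
    rw [← Finset.sum_filter]
    by_cases hsub : m.support ⊆ S
    · rw [← Finset.sum_mul, mobius_inner S m.support hsub]
    · have hempty : S.powerset.filter (fun T => m.support ⊆ T) = ∅ := by
        rw [Finset.filter_eq_empty_iff]
        intro T hT hc
        exact hsub (hc.trans (Finset.mem_powerset.mp hT))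
      rw [hempty, Finset.sum_empty, if_neg, zero_mul]
      intro hc; exact hsub (hc ▸ Finset.Subset.refl S)
  rw [Finset.sum_congr rfl step2]
  by_cases hmem : indF n S ∈ P.support
  · rw [Finset.sum_eq_single_of_mem (indF n S) hmem]
    · rw [if_pos (indF_support S), one_mul]
    · intro m hm hne
      rw [if_neg, zero_mul]
      intro hc
      exact hne (eq_indF hml hm hc)
  · rw [notMem_support_iff] at hmem
    rw [hmem]
    refine (Finset.sum_eq_zero fun m hm => ?_).symm
    by_cases hc : m.support = S
    · exact absurd (eq_indF hml hm hc ▸ hm) (by rw [mem_support_iff, hmem]; simp)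
    · rw [if_neg hc, zero_mul]

theorem sparsity_of_multilinear_parity_signrep (n : ℕ) (P : MvPolynomial (Fin n) ℝ)
    (hml : ∀ m ∈ P.support, ∀ i, m i ≤ 1)
    (hrep : SignRepParity n {0, 1} P) :
    P.support.card = 2 ^ n := by
  have key : ∀ S : Finset (Fin n), coeff (indF n S) P ≠ 0 := by
    intro S
    have hc := coeff_ind P hml S
    have hpos : 0 < (-1 : ℝ) ^ S.card * coeff (indF n S) P := by
      rw [hc, Finset.mul_sum]
      refine Finset.sum_pos ?_ ⟨∅, Finset.empty_mem_powerset S⟩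
      intro T hT
      have hE := sign_eval P hrep T
      have heq : (-1 : ℝ) ^ S.card *
          ((-1 : ℝ) ^ (S.card + T.card) * eval (fun i => if i ∈ T then (1 : ℝ) else 0) P)
            = (-1 : ℝ) ^ T.card * eval (fun i => if i ∈ T then (1 : ℝ) else 0) P := by
        rw [← mul_assoc, ← pow_add,
          show S.card + (S.card + T.card) = 2 * S.card + T.card by ring,
          pow_add, pow_mul, neg_one_sq, one_pow, one_mul]
      rw [heq]
      exact hE
    intro h
    rw [h, mul_zero] at hpos
    exact lt_irrefl 0 hpos
  have hcardu : (Finset.univ : Finset (Finset (Fin n))).card = 2 ^ n := by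
    simp [Finset.card_univ]
  have h1 : P.support.card ≤ 2 ^ n := by
    rw [← hcardu]
    refine Finset.card_le_card_of_injOn (fun m => m.support) (fun _ _ => Finset.mem_univ _) ?_
    intro m1 h1 m2 h2 hsup
    rw [eq_indF hml h1 rfl, eq_indF hml h2 rfl]
    simp only at hsup
    rw [hsup]
  have h2 : 2 ^ n ≤ P.support.card := by
    rw [← hcardu]
    refine Finset.card_le_card_of_injOn (fun S => indF n S)
      (fun S _ => mem_support_iff.mpr (key S)) ?_
    intro S1 _ S2 _ hind
    have := congrArg Finsupp.support hind
    rwa [indF_support, indF_support] at this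
  omega
end

section
/- Any polynomial that sign represents parity over {0,1}ⁿ has degree at least n. -/
open MvPolynomial

theorem degree_of_parity_signrep (n : ℕ) (P : MvPolynomial (Fin n) ℝ)
    (hrep : SignRepParity n {0, 1} P) :
    n ≤ P.totalDegree := by
  by_contra hlt
  push_neg at hlt
  set S : ℝ := ∑ σ : Fin n → Bool,
      (-1 : ℝ) ^ (∑ i, if σ i then 1 else 0) *
        eval (fun i => ((if σ i then 1 else 0 : ℕ) : ℝ)) P with hS
  have hpos : 0 < S := by
    apply Finset.sum_pos
    · intro σ _
      have h := hrep (fun i => if σ i then 1 else 0)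
        (by intro i; cases σ i <;> simp)
      rcases Nat.even_or_odd (∑ i, if σ i then 1 else 0) with he | ho
      · have := h.1 he
        rw [(he.neg_one_pow : (-1 : ℝ) ^ _ = 1)]
        simpa using this
      · have := h.2 ho
        rw [(Odd.neg_one_pow ho : (-1 : ℝ) ^ _ = -1)]
        nlinarith
    · exact Finset.univ_nonempty
  have hzero : S = 0 := by
    rw [hS]
    have heval : ∀ σ : Fin n → Bool,
        (-1 : ℝ) ^ (∑ i, if σ i then 1 else 0) *
          eval (fun i => ((if σ i then 1 else 0 : ℕ) : ℝ)) P
        = ∑ d ∈ P.support, P.coeff d *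
            ∏ i, ((-1 : ℝ) ^ (if σ i then 1 else 0) *
              ((if σ i then (1:ℝ) else 0)) ^ d i) := by
      intro σ
      rw [eval_eq', Finset.mul_sum]
      refine Finset.sum_congr rfl fun d _ => ?_
      rw [mul_left_comm]
      congr 1
      rw [Finset.prod_mul_distrib, ← Finset.prod_pow_eq_pow_sum]
      congr 1
      refine Finset.prod_congr rfl fun i _ => ?_
      cases σ i <;> simp
    simp_rw [heval]
    rw [Finset.sum_comm]
    refine Finset.sum_eq_zero fun d hd => ?_
    have hsum : ∑ σ : Fin n → Bool, ∏ i, ((-1 : ℝ) ^ (if σ i then 1 else 0) *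
          ((if σ i then (1:ℝ) else 0)) ^ d i)
        = ∏ i, ∑ b : Bool, ((-1 : ℝ) ^ (if b then 1 else 0) *
          ((if b then (1:ℝ) else 0)) ^ d i) := by
      rw [Fintype.prod_sum]
    -- find an index with exponent 0
    have hdeg : ∑ i, d i < n := by
      have h1 : (d.sum fun _ e => e) ≤ P.totalDegree := le_totalDegree hd
      have h2 : ∑ i, d i = d.sum fun _ e => e := by
        rw [Finsupp.sum_fintype]; intro; rfl
      omega
    have hex : ∃ i, d i = 0 := by
      by_contra hall
      push_neg at hall
      have : (n : ℕ) ≤ ∑ i, d i := by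
        calc n = ∑ _i : Fin n, 1 := by simp
        _ ≤ ∑ i, d i := Finset.sum_le_sum fun i _ =>
            Nat.one_le_iff_ne_zero.mpr (hall i)
      omega
    obtain ⟨i, hi⟩ := hex
    rw [← Finset.mul_sum, hsum, Finset.prod_eq_zero (Finset.mem_univ i), mul_zero]
    simp [hi]
  linarith
end

section
/- Let 0 < a₀ < a₁ < ... < a_{k−1} be real numbers and d₀ < d₁ < ... < d_{k−1} be non-negative integers. Then the generalized Vandermonde matrix V with entries V_{ij} = aᵢ^{dⱼ} has strictly positive determinant. -/
/-!
By Descartes' rule of signs a nonzero real polynomial with at most `k` monomials has fewer than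
`k` positive roots, so the generalized Vandermonde matrix is nonsingular. For the sign, induct
on `k`: replacing `a_{k-1}` by a variable `x` and expanding along the last row, the determinant
becomes a polynomial in `x` whose leading coefficient is the smaller generalized Vandermonde
determinant, positive by induction. This polynomial has no root `x ≥ a_{k-1}`, since the points
stay distinct and positive, so it keeps there the positive sign it has at `+∞`.
-/

open Finset Matrix Polynomial Filter

namespace Polynomial

theorem signVariations_lt_card_support {R : Type*} [Semiring R] [LinearOrder R] {P : R[X]}
    (hP : P ≠ 0) : P.signVariations < #P.support := by
  induction hn : #P.support generalizing P with
  | zero => exact absurd (card_support_eq_zero.mp hn) hP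
  | succ n ih =>
    by_cases hE : P.eraseLead = 0
    · rw [← eraseLead_add_monomial_natDegree_leadingCoeff P, hE, zero_add,
        signVariations_monomial]
      exact n.succ_pos
    · have := ih hE (by rw [card_support_eraseLead, hn, Nat.add_sub_cancel])
      have := signVariations_le_eraseLead_succ P
      omega

section OrderedRing

variable {R : Type*} [CommRing R] [LinearOrder R] [IsStrictOrderedRing R]

theorem countP_roots_pos_lt_card_support {P : R[X]} (hP : P ≠ 0) :
    P.roots.countP (0 < ·) < #P.support :=
  (roots_countP_pos_le_signVariations P).trans_lt (signVariations_lt_card_support hP)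

theorem eq_zero_of_card_support_le_of_pos_roots {P : R[X]} {s : Finset R}
    (hs : ∀ x ∈ s, 0 < x ∧ P.IsRoot x) (hcard : #P.support ≤ #s) : P = 0 := by
  by_contra hP
  have hs_roots : #s ≤ P.roots.countP (0 < ·) := by
    rw [Multiset.countP_eq_card_filter]
    refine (card_le_card fun x hx => ?_).trans (Multiset.toFinset_card_le _)
    rw [Multiset.mem_toFinset, Multiset.mem_filter, mem_roots hP]
    exact ⟨(hs x hx).2, (hs x hx).1⟩
  exact (hs_roots.trans_lt (countP_roots_pos_lt_card_support hP)).not_ge hcard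

end OrderedRing

section SumMonomial

variable {R ι : Type*} [Semiring R] [Fintype ι] {d : ι → ℕ}

theorem coeff_sum_monomial_apply (hd : Function.Injective d) (c : ι → R) (i : ι) :
    (∑ j, monomial (d j) (c j)).coeff (d i) = c i := by
  rw [finsetSum_coeff, sum_eq_single i (fun j _ hj => coeff_monomial_of_ne _ (hd.ne hj.symm))
    (fun h => absurd (mem_univ i) h), coeff_monomial_same]

theorem card_support_sum_monomial_le (c : ι → R) :
    #(∑ j, monomial (d j) (c j)).support ≤ Fintype.card ι := by
  classical
  refine (card_le_card fun n hn => ?_).trans (card_image_le (s := univ) (f := d))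
  contrapose! hn
  simp_all [coeff_monomial]

theorem leadingCoeff_sum_monomial {n : ℕ} {d : Fin (n + 1) → ℕ} (hd : StrictMono d)
    {c : Fin (n + 1) → R} (hc : c (Fin.last n) ≠ 0) :
    (∑ j, monomial (d j) (c j)).leadingCoeff = c (Fin.last n) := by
  have hdeg : (∑ j, monomial (d j) (c j)).natDegree ≤ d (Fin.last n) :=
    natDegree_sum_le_of_forall_le _ _ fun j _ =>
      (natDegree_monomial_le _).trans (hd.monotone (Fin.le_last j))
  rw [leadingCoeff, natDegree_eq_of_le_of_coeff_ne_zero hdeg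
    (by rwa [coeff_sum_monomial_apply hd.injective]), coeff_sum_monomial_apply hd.injective]

end SumMonomial

theorem eval_pos_of_leadingCoeff_pos {P : ℝ[X]} {x : ℝ} (hP : 0 < P.leadingCoeff)
    (hroots : ∀ y, x ≤ y → P.eval y ≠ 0) : 0 < P.eval x := by
  have hlarge : ∀ᶠ y in atTop, 0 < P.eval y :=
    (isEquivalent_atTop_lead P).eventually_pos <|
      (eventually_gt_atTop 0).mono fun y hy => mul_pos hP (pow_pos hy _)
  obtain ⟨X, hxX, hX⟩ := ((eventually_ge_atTop x).and hlarge).exists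
  by_contra! hneg
  obtain ⟨y, hy, hy0⟩ :=
    intermediate_value_Icc hxX P.continuous.continuousOn ⟨hneg, hX.le⟩
  exact hroots y hy.1 hy0

end Polynomial

theorem Matrix.det_of_pow_snoc {R : Type*} [CommRing R] {n : ℕ} (b : Fin n → R)
    (d : Fin (n + 1) → ℕ) (x : R) :
    det (of fun i j => (Fin.snoc b x : Fin (n + 1) → R) i ^ d j) =
      (∑ j, monomial (d j) ((-1) ^ (n + j : ℕ) *
        det (of fun i j' => b i ^ d (j.succAbove j')))).eval x := by
  rw [det_succ_row _ (Fin.last n), eval_finsetSum]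
  refine sum_congr rfl fun j _ => ?_
  simp only [eval_monomial, of_apply, Fin.snoc_last, Fin.succAbove_last, Fin.val_last]
  rw [mul_right_comm]
  congr 3
  ext i j'
  simp

theorem Matrix.det_of_pow_ne_zero {R ι : Type*} [CommRing R] [LinearOrder R]
    [IsStrictOrderedRing R] [Fintype ι] [DecidableEq ι] {a : ι → R}
    {d : ι → ℕ} (ha_pos : ∀ i, 0 < a i) (ha : Function.Injective a)
    (hd : Function.Injective d) : det (of fun i j => a i ^ d j) ≠ 0 := by
  intro hdet
  obtain ⟨c, hc, hVc⟩ := exists_mulVec_eq_zero_iff.mpr hdet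
  have hroot : ∀ i, (∑ j, monomial (d j) (c j)).IsRoot (a i) := fun i => by
    simpa [mulVec, dotProduct, eval_finsetSum, mul_comm] using congrFun hVc i
  have hzero : ∑ j, monomial (d j) (c j) = 0 :=
    eq_zero_of_card_support_le_of_pos_roots (s := univ.image a)
      (by simpa using fun i => ⟨ha_pos i, hroot i⟩)
      (by simpa [card_image_of_injective _ ha] using card_support_sum_monomial_le c)
  exact hc (funext fun j => by
    rw [← coeff_sum_monomial_apply hd c j, hzero, coeff_zero, Pi.zero_apply])

theorem Matrix.det_of_pow_snoc_pos {n : ℕ} {b : Fin n → ℝ} {d : Fin (n + 1) → ℕ}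
    (hd : StrictMono d) (hminor : 0 < det (of fun i j => b i ^ d (Fin.castSucc j))) {x : ℝ}
    (hne : ∀ y, x ≤ y →
      det (of fun i j => (Fin.snoc b y : Fin (n + 1) → ℝ) i ^ d j) ≠ 0) :
    0 < det (of fun i j => (Fin.snoc b x : Fin (n + 1) → ℝ) i ^ d j) := by
  simp only [det_of_pow_snoc] at hne ⊢
  refine eval_pos_of_leadingCoeff_pos ?_ hne
  rw [leadingCoeff_sum_monomial hd] <;> simp only [Fin.val_last, Fin.succAbove_last, ← two_mul,
    pow_mul, neg_one_sq, one_pow, one_mul, hminor, hminor.ne', ne_eq, not_false_eq_true]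

theorem generalized_vandermonde_det_pos (k : ℕ) (a : Fin k → ℝ) (d : Fin k → ℕ)
    (ha_pos : ∀ i, 0 < a i) (ha : StrictMono a) (hd : StrictMono d) :
    0 < Matrix.det (Matrix.of fun i j => a i ^ d j) := by
  induction k with
  | zero => simp
  | succ k ih =>
    rw [← Fin.snoc_init_self a]
    have hminor := ih (Fin.init a) (d ∘ Fin.castSucc) (fun i => ha_pos _)
      (ha.comp Fin.strictMono_castSucc) (hd.comp Fin.strictMono_castSucc)
    refine det_of_pow_snoc_pos hd hminor fun y hy =>
      det_of_pow_ne_zero (fun i => ?_) ?_ hd.injective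
    · cases i using Fin.lastCases <;> simp [Fin.init, ha_pos, (ha_pos _).trans_le hy]
    · refine Fin.snoc_injective_of_injective (ha.injective.comp (Fin.castSucc_injective _)) ?_
      rintro ⟨i, hi⟩
      exact (ha (Fin.castSucc_lt_last i)).trans_le hy |>.ne hi
end

section
/- Let P(X₁,...,Xₙ) sign represent parity over {0,1,...,m−1}ⁿ with the degree of each variable Xᵢ at most m−1. Then P has sparsity exactly mⁿ, and the coefficient of the monomial ∏ⱼ Xⱼ^{iⱼ} has sign (−1)^{Σⱼ iⱼ}. -/
open Polynomial Finset

lemma my_esymm_nonneg (M : Multiset ℝ) (hM : ∀ x ∈ M, 0 ≤ x) (j : ℕ) : 0 ≤ M.esymm j := by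
  apply Multiset.sum_nonneg
  intro x hx
  simp only [Multiset.mem_map] at hx
  obtain ⟨t, ht, rfl⟩ := hx
  exact Multiset.prod_nonneg fun y hy =>
    hM y (Multiset.mem_of_le (Multiset.mem_powersetCard.mp ht).1 hy)

lemma my_esymm_pos (M : Multiset ℝ) (hM : ∀ x ∈ M, 0 < x) (j : ℕ)
    (hj : j ≤ Multiset.card M) : 0 < M.esymm j := by
  have hcard : Multiset.card (M.powersetCard j) = (Multiset.card M).choose j :=
    Multiset.card_powersetCard j M
  have hne : M.powersetCard j ≠ 0 := by
    intro h
    rw [h] at hcard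
    simp only [Multiset.card_zero] at hcard
    exact absurd hcard.symm (Nat.choose_pos hj).ne'
  obtain ⟨t, ht⟩ := Multiset.exists_mem_of_ne_zero hne
  have htpos : 0 < t.prod := Multiset.prod_pos fun y hy =>
    hM y (Multiset.mem_of_le (Multiset.mem_powersetCard.mp ht).1 hy)
  obtain ⟨T, hT⟩ := Multiset.exists_cons_of_mem (Multiset.mem_map_of_mem Multiset.prod ht)
  unfold Multiset.esymm
  rw [hT, Multiset.sum_cons]
  have : 0 ≤ T.sum := by
    apply Multiset.sum_nonneg
    intro x hx
    have hx' : x ∈ (M.powersetCard j).map Multiset.prod := by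
      rw [hT]; exact Multiset.mem_cons_of_mem hx
    simp only [Multiset.mem_map] at hx'
    obtain ⟨u, hu, rfl⟩ := hx'
    exact Multiset.prod_nonneg fun y hy =>
      (hM y (Multiset.mem_of_le (Multiset.mem_powersetCard.mp hu).1 hy)).le
  linarith

lemma my_prod_sign (m a : ℕ) (ha : a < m) :
    0 < (-1:ℝ)^(m-1-a) * ∏ j ∈ (Finset.range m).erase a, ((a:ℝ) - (j:ℝ)) := by
  have hsplit : (Finset.range m).erase a = Finset.range a ∪ Finset.Ico (a+1) m := by
    ext x
    simp only [Finset.mem_erase, Finset.mem_range, Finset.mem_union, Finset.mem_Ico]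
    omega
  have hdisj : Disjoint (Finset.range a) (Finset.Ico (a+1) m) := by
    rw [Finset.disjoint_left]
    intro x hx hx'
    simp only [Finset.mem_range] at hx
    simp only [Finset.mem_Ico] at hx'
    omega
  rw [hsplit, Finset.prod_union hdisj]
  have h1 : 0 < ∏ j ∈ Finset.range a, ((a:ℝ) - j) := by
    apply Finset.prod_pos
    intro j hj
    have : (j:ℝ) < a := by exact_mod_cast Finset.mem_range.mp hj
    linarith
  have h2 : ∏ j ∈ Finset.Ico (a+1) m, ((a:ℝ) - j)
      = (-1:ℝ)^(m-1-a) * ∏ j ∈ Finset.Ico (a+1) m, ((j:ℝ) - a) := by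
    have e1 : ∀ j ∈ Finset.Ico (a+1) m, ((a:ℝ) - j) = (-1) * ((j:ℝ) - a) := fun j _ => by ring
    rw [Finset.prod_congr rfl e1, Finset.prod_mul_distrib, Finset.prod_const, Nat.card_Ico]
    congr 2
    omega
  have h3 : 0 < ∏ j ∈ Finset.Ico (a+1) m, ((j:ℝ) - a) := by
    apply Finset.prod_pos
    intro j hj
    have : (a:ℝ) < j := by exact_mod_cast (Finset.mem_Ico.mp hj).1
    linarith
  have hsq : (-1:ℝ)^(m-1-a) * (-1:ℝ)^(m-1-a) = 1 := by
    rw [← pow_add]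
    exact Even.neg_one_pow ⟨m-1-a, rfl⟩
  rw [h2]
  calc (0:ℝ) < (∏ j ∈ Finset.range a, ((a:ℝ) - j)) * ∏ j ∈ Finset.Ico (a+1) m, ((j:ℝ) - a) :=
        mul_pos h1 h3
    _ = (-1:ℝ)^(m-1-a) * ((∏ j ∈ Finset.range a, ((a:ℝ) - j)) *
        ((-1:ℝ)^(m-1-a) * ∏ j ∈ Finset.Ico (a+1) m, ((j:ℝ) - a))) := by
        rw [show ∀ x y s : ℝ, s * (x * (s * y)) = (s*s) * (x*y) from fun x y s => by ring, hsq,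
          one_mul]

lemma my_uni (m : ℕ) (hm : 2 ≤ m) (p : ℝ[X]) (hdeg : p.degree < (m:ℕ))
    (hs : ∀ a < m, 0 < (-1:ℝ)^a * p.eval (a:ℝ)) :
    ∀ k < m, 0 < (-1:ℝ)^k * p.coeff k := by
  intro k hk
  classical
  set v : ℕ → ℝ := fun j => (j : ℝ) with hv
  have hinj : Set.InjOn v (Finset.range m : Finset ℕ) := fun x _ y _ h => Nat.cast_injective h
  have hint := Lagrange.eq_interpolate hinj (by simpa [Finset.card_range] using hdeg)
  have hco : p.coeff k = ∑ a ∈ Finset.range m,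
      p.eval (v a) * (Lagrange.basis (Finset.range m) v a).coeff k := by
    conv_lhs => rw [hint]
    rw [Lagrange.interpolate_apply, Polynomial.finset_sum_coeff]
    exact Finset.sum_congr rfl fun a _ => by rw [Polynomial.coeff_C_mul]
  have main : ∀ a ∈ Finset.range m, ∃ u w E : ℝ, 0 < u ∧ 0 < w ∧ 0 ≤ E ∧ (a = 0 → 0 < E) ∧
      (-1:ℝ)^k * (p.eval (v a) * (Lagrange.basis (Finset.range m) v a).coeff k) = u * w * E := by
    intro a ha
    have ham := Finset.mem_range.mp ha
    set t : Finset ℕ := (Finset.range m).erase a with htdef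
    set D : ℝ := ∏ j ∈ t, (v a - v j) with hDdef
    set M : Multiset ℝ := t.val.map v with hMdef
    have hcardt : t.card = m - 1 := by
      rw [htdef, Finset.card_erase_of_mem ha, Finset.card_range]
    have hcardM : Multiset.card M = m - 1 := by
      rw [hMdef, Multiset.card_map]; exact hcardt
    have hDsign : 0 < (-1:ℝ)^(m-1-a) * D := my_prod_sign m a ham
    have hDne : D ≠ 0 := by
      intro h0
      rw [h0, mul_zero] at hDsign
      exact lt_irrefl 0 hDsign
    have hb : (Lagrange.basis (Finset.range m) v a).coeff k
        = D⁻¹ * ((-1:ℝ)^(m-1-k) * M.esymm (m-1-k)) := by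
      have e1 : Lagrange.basis (Finset.range m) v a
          = Polynomial.C D⁻¹ * ∏ j ∈ t, (X - Polynomial.C (v j)) := by
        rw [Lagrange.basis]
        simp_rw [Lagrange.basisDivisor]
        rw [Finset.prod_mul_distrib, ← map_prod, ← Finset.prod_inv_distrib]
      have e2 : ∏ j ∈ t, ((X:ℝ[X]) - Polynomial.C (v j))
          = (M.map fun r => X - Polynomial.C r).prod := by
        rw [hMdef, Multiset.map_map]
        rfl
      rw [e1, Polynomial.coeff_C_mul, e2,
        Multiset.prod_X_sub_C_coeff M (by rw [hcardM]; omega), hcardM]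
    refine ⟨(-1:ℝ)^a * p.eval (v a), (-1:ℝ)^(m-1-a) * D⁻¹, M.esymm (m-1-k), hs a ham, ?_, ?_, ?_, ?_⟩
    · have h1 : 0 < ((-1:ℝ)^(m-1-a) * D)⁻¹ := inv_pos.mpr hDsign
      rw [mul_inv] at h1
      have h2 : ((-1:ℝ)^(m-1-a))⁻¹ = (-1:ℝ)^(m-1-a) := by
        rw [← inv_pow]; norm_num
      rwa [h2] at h1
    · apply my_esymm_nonneg
      intro x hx
      rw [hMdef] at hx
      obtain ⟨j, _, rfl⟩ := Multiset.mem_map.mp hx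
      exact Nat.cast_nonneg j
    · intro ha0
      apply my_esymm_pos
      · intro x hx
        rw [hMdef] at hx
        obtain ⟨j, hj, rfl⟩ := Multiset.mem_map.mp hx
        have hj' : j ∈ t := hj
        rw [htdef, ha0] at hj'
        have hj0 : j ≠ 0 := (Finset.mem_erase.mp hj').1
        show (0:ℝ) < (j:ℝ)
        exact_mod_cast Nat.pos_of_ne_zero hj0
      · rw [hcardM]; omega
    · rw [hb]
      have s1 : (-1:ℝ)^k * (-1:ℝ)^(m-1-k) = (-1:ℝ)^(m-1) := by
        rw [← pow_add]; congr 1; omega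
      have s2 : (-1:ℝ)^a * (-1:ℝ)^(m-1-a) = (-1:ℝ)^(m-1) := by
        rw [← pow_add]; congr 1; omega
      have s3 : (-1:ℝ)^(m-1) * (-1:ℝ)^(m-1) = 1 := by
        rw [← pow_add]; exact Even.neg_one_pow ⟨m-1, rfl⟩
      have key : (-1:ℝ)^k * (p.eval (v a) * (D⁻¹ * ((-1:ℝ)^(m-1-k) * M.esymm (m-1-k))))
          = (((-1:ℝ)^k * (-1:ℝ)^(m-1-k)) * ((-1:ℝ)^a * (-1:ℝ)^(m-1-a))) *
            (((-1:ℝ)^a * p.eval (v a)) * ((-1:ℝ)^(m-1-a) * D⁻¹) * M.esymm (m-1-k)) := by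
        have haa : (-1:ℝ)^a * (-1:ℝ)^a = 1 := by
          rw [← pow_add]; exact Even.neg_one_pow ⟨a, rfl⟩
        have hbb : (-1:ℝ)^(m-1-a) * (-1:ℝ)^(m-1-a) = 1 := by
          rw [← pow_add]; exact Even.neg_one_pow ⟨m-1-a, rfl⟩
        have gen : ∀ sk smk sa sma β δ E : ℝ, sa*sa = 1 → sma*sma = 1 →
            ((sk*smk)*(sa*sma))*((sa*β)*(sma*δ)*E) = sk*(β*(δ*(smk*E))) := by
          intro sk smk sa sma β δ E h1 h2
          linear_combination (sk*smk*β*δ*E*sma*sma)*h1 + (sk*smk*β*δ*E)*h2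
        exact (gen _ _ _ _ _ _ _ haa hbb).symm
      rw [key, s1, s2, s3, one_mul]
  rw [hco, Finset.mul_sum]
  apply Finset.sum_pos'
  · intro a ha
    obtain ⟨u, w, E, hu, hw, hE, _, heq⟩ := main a ha
    rw [heq]
    exact mul_nonneg (mul_nonneg hu.le hw.le) hE
  · refine ⟨0, Finset.mem_range.mpr (by omega), ?_⟩
    obtain ⟨u, w, E, hu, hw, _, hE0, heq⟩ := main 0 (Finset.mem_range.mpr (by omega))
    rw [heq]
    exact mul_pos (mul_pos hu hw) (hE0 rfl)

open MvPolynomial in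
lemma my_mv : ∀ (n m : ℕ), 2 ≤ m → ∀ (P : MvPolynomial (Fin n) ℝ),
    (∀ i, P.degreeOf i ≤ m - 1) →
    (∀ a : Fin n → ℕ, (∀ i, a i < m) →
      0 < (-1:ℝ)^(∑ i, a i) * MvPolynomial.eval (fun i => (a i : ℝ)) P) →
    ∀ d : Fin n →₀ ℕ, (∀ i, d i < m) → 0 < (-1:ℝ)^(∑ i, d i) * P.coeff d := by
  intro n
  induction n with
  | zero =>
    intro m hm P hdeg hsign d _
    have h0 := hsign (fun _ => 0) (fun i => i.elim0)
    have hd0 : d = 0 := Subsingleton.elim d 0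
    subst hd0
    rw [MvPolynomial.eq_C_of_isEmpty P] at h0 ⊢
    simp only [Finset.univ_eq_empty, Finset.sum_empty, pow_zero, one_mul,
      MvPolynomial.eval_C] at h0
    simpa [MvPolynomial.coeff_zero_C] using h0
  | succ n ih =>
    intro m hm P hdeg hsign d hd
    set Q := MvPolynomial.finSuccEquiv ℝ n P with hQ
    set k := d 0 with hkdef
    set d' := Finsupp.tail d with hd'def
    have hcons : Finsupp.cons k d' = d := Finsupp.cons_tail d
    have hcoeff : P.coeff d = MvPolynomial.coeff d' (Q.coeff k) := by
      rw [MvPolynomial.finSuccEquiv_coeff_coeff d' P k, hcons]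
    set R := MvPolynomial.C ((-1:ℝ)^k) * Q.coeff k with hRdef
    have hdegR : ∀ i, R.degreeOf i ≤ m - 1 := fun i =>
      le_trans (MvPolynomial.degreeOf_C_mul_le _ _ _)
        (le_trans (MvPolynomial.degreeOf_coeff_finSuccEquiv P i k) (hdeg i.succ))
    have hsignR : ∀ a : Fin n → ℕ, (∀ i, a i < m) →
        0 < (-1:ℝ)^(∑ i, a i) * MvPolynomial.eval (fun i => (a i:ℝ)) R := by
      intro a ha
      set pa : Polynomial ℝ :=
        Polynomial.map (MvPolynomial.eval (fun i => (a i : ℝ))) Q with hpadef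
      set qa : Polynomial ℝ := Polynomial.C ((-1:ℝ)^(∑ i, a i)) * pa with hqadef
      have hdq : qa.degree < (m:ℕ) := by
        refine lt_of_le_of_lt Polynomial.degree_le_natDegree ?_
        have h1 : qa.natDegree ≤ pa.natDegree := Polynomial.natDegree_C_mul_le _ _
        have h2 : pa.natDegree ≤ Q.natDegree := Polynomial.natDegree_map_le
        have h3 : Q.natDegree = P.degreeOf 0 := MvPolynomial.natDegree_finSuccEquiv P
        have h4 : P.degreeOf 0 ≤ m - 1 := hdeg 0
        exact_mod_cast Nat.lt_of_le_of_lt (h1.trans (h2.trans (h3.le.trans h4))) (by omega)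
      have hq : ∀ x < m, 0 < (-1:ℝ)^x * qa.eval (x:ℝ) := by
        intro x hx
        have hall : ∀ i, (Fin.cons x a : Fin (n+1) → ℕ) i < m := by
          intro i
          refine Fin.cases ?_ ?_ i
          · exact hx
          · intro j; exact ha j
        have hthis := hsign (Fin.cons x a) hall
        rw [Fin.sum_univ_succ] at hthis
        simp only [Fin.cons_zero, Fin.cons_succ] at hthis
        have hfun : (fun i => ((Fin.cons x a : Fin (n+1) → ℕ) i : ℝ))
            = Fin.cons (x:ℝ) (fun i => (a i : ℝ)) := by
          funext i
          refine Fin.cases rfl (fun j => rfl) i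
        rw [hfun, MvPolynomial.eval_eq_eval_mv_eval'] at hthis
        rw [hqadef, Polynomial.eval_mul, Polynomial.eval_C, ← mul_assoc, ← pow_add]
        exact hthis
      have huni := my_uni m hm qa hdq hq k (by rw [hkdef]; exact hd 0)
      have hc1 : qa.coeff k = (-1:ℝ)^(∑ i, a i) * pa.coeff k := Polynomial.coeff_C_mul _
      have hc2 : pa.coeff k = MvPolynomial.eval (fun i => (a i:ℝ)) (Q.coeff k) :=
        Polynomial.coeff_map _ _
      have hevR : MvPolynomial.eval (fun i => (a i:ℝ)) R
          = (-1:ℝ)^k * MvPolynomial.eval (fun i => (a i:ℝ)) (Q.coeff k) := by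
        rw [hRdef, map_mul, MvPolynomial.eval_C]
      rw [hevR, ← hc2]
      rw [hc1] at huni
      calc (0:ℝ) < (-1:ℝ)^k * ((-1:ℝ)^(∑ i, a i) * pa.coeff k) := huni
        _ = (-1:ℝ)^(∑ i, a i) * ((-1:ℝ)^k * pa.coeff k) := by ring
    have hIH := ih m hm R hdegR hsignR d'
      (fun i => by rw [hd'def, Finsupp.tail_apply]; exact hd i.succ)
    have hcR : R.coeff d' = (-1:ℝ)^k * P.coeff d := by
      rw [hRdef, MvPolynomial.coeff_C_mul, hcoeff]
    have hsum : ∑ i, d i = k + ∑ i, d' i := by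
      rw [Fin.sum_univ_succ, hkdef, hd'def]
      simp [Finsupp.tail_apply]
    rw [hcR] at hIH
    rw [hsum, pow_add]
    calc (0:ℝ) < (-1:ℝ)^(∑ i, d' i) * ((-1:ℝ)^k * P.coeff d) := hIH
      _ = (-1:ℝ)^k * (-1:ℝ)^(∑ i, d' i) * P.coeff d := by ring

open MvPolynomial

theorem low_degree_parity_signrep_sparsity (n m : ℕ) (hm : 2 ≤ m)
    (P : MvPolynomial (Fin n) ℝ)
    (hdeg : ∀ i, P.degreeOf i ≤ m - 1)
    (hrep : SignRepParity n (Finset.range m) P) :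
    P.support.card = m ^ n ∧
    ∀ d : Fin n →₀ ℕ, (∀ i, d i ≤ m - 1) →
      (Even (∑ i, d i) → 0 < P.coeff d) ∧ (Odd (∑ i, d i) → P.coeff d < 0) := by
  have hm0 : 0 < m := by omega
  have hsign : ∀ a : Fin n → ℕ, (∀ i, a i < m) →
      0 < (-1:ℝ)^(∑ i, a i) * MvPolynomial.eval (fun i => (a i : ℝ)) P := by
    intro a ha
    obtain ⟨h1, h2⟩ := hrep a (fun i => Finset.mem_range.mpr (ha i))
    rcases Nat.even_or_odd (∑ i, a i) with he | ho
    · rw [he.neg_one_pow, one_mul]; exact h1 he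
    · rw [ho.neg_one_pow]
      have := h2 ho
      linarith
  have hkey : ∀ d : Fin n →₀ ℕ, (∀ i, d i < m) → 0 < (-1:ℝ)^(∑ i, d i) * P.coeff d :=
    my_mv n m hm P hdeg hsign
  constructor
  · have hsupp : P.support = Finset.map (Finsupp.equivFunOnFinite.symm.toEmbedding)
        (Fintype.piFinset fun _ : Fin n => Finset.range m) := by
      ext d
      rw [Finset.mem_map_equiv]
      simp only [Equiv.symm_symm, Fintype.mem_piFinset, Finsupp.equivFunOnFinite_apply,
        Finset.mem_range]
      constructor
      · intro hdsupp i
        exact (MvPolynomial.degreeOf_lt_iff hm0).mp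
          (lt_of_le_of_lt (hdeg i) (by omega)) d hdsupp
      · intro hdi
        rw [MvPolynomial.mem_support_iff]
        have hp := hkey d hdi
        intro h0
        rw [h0, mul_zero] at hp
        exact lt_irrefl 0 hp
    rw [hsupp, Finset.card_map, Fintype.card_piFinset]
    simp
  · intro d hd
    have hd' : ∀ i, d i < m := fun i => by have := hd i; omega
    have hp := hkey d hd'
    constructor
    · intro he
      rw [he.neg_one_pow, one_mul] at hp
      exact hp
    · intro ho
      rw [ho.neg_one_pow] at hp
      linarith
end

section
/- If a univariate polynomial P(X) ∈ ℝ[X] of degree at most m−1 sign represents parity over {0,1,...,m−1} (i.e., sign(P(k)) = (−1)^k for k = 0,...,m−1), then writing P(X) = Σ_{i=0}^{m−1} cᵢXⁱ, each coefficient satisfies sign(cᵢ) = (−1)ⁱ; in particular all coefficients are nonzero. -/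
open Polynomial

lemma esymm_pos_of_pos (s : Multiset ℝ) (h : ∀ x ∈ s, 0 < x) (n : ℕ)
    (hn : n ≤ Multiset.card s) : 0 < s.esymm n := by
  rw [Multiset.esymm]
  have hpos : ∀ x ∈ (Multiset.powersetCard n s).map Multiset.prod, 0 < x := by
    intro x hx
    obtain ⟨t, ht, rfl⟩ := Multiset.mem_map.1 hx
    rw [Multiset.mem_powersetCard] at ht
    exact Multiset.prod_pos fun y hy => h y (Multiset.mem_of_le ht.1 hy)
  have hne : (Multiset.powersetCard n s).map Multiset.prod ≠ 0 := by
    simp only [ne_eq, Multiset.map_eq_zero]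
    intro hzero
    have hcard := Multiset.card_powersetCard n s
    rw [hzero] at hcard
    simp only [Multiset.card_zero] at hcard
    have := Nat.choose_pos hn
    omega
  obtain ⟨x, hx⟩ := Multiset.exists_mem_of_ne_zero hne
  calc (0:ℝ) < x := hpos x hx
    _ ≤ _ := Multiset.single_le_sum (fun y hy => le_of_lt (hpos y hy)) x hx

theorem univariate_parity_signrep_coeff_signs (m : ℕ) (hm : 1 ≤ m) (P : Polynomial ℝ)
    (hdeg : P.natDegree ≤ m - 1)
    (hrep : ∀ k < m, (Even k → 0 < P.eval (k : ℝ)) ∧ (Odd k → P.eval (k : ℝ) < 0)) :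
    ∀ i ≤ m - 1, (Even i → 0 < P.coeff i) ∧ (Odd i → P.coeff i < 0) := by
  set n := m - 1 with hn
  have hmn : m = n + 1 := by omega
  -- P ≠ 0
  have h0 : 0 < P.eval 0 := by
    have := (hrep 0 (by omega)).1 (by exact Even.zero)
    simpa using this
  have hP0 : P ≠ 0 := by
    intro h; rw [h] at h0; simp at h0
  -- for each k < n there is a root in (k, k+1)
  have hroot : ∀ k, k < n → ∃ x ∈ Set.Ioo (k : ℝ) (k + 1), P.eval x = 0 := by
    intro k hk
    have hk1 : k < m := by omega
    have hk2 : k + 1 < m := by omega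
    have hcont : ContinuousOn (fun x => P.eval x) (Set.Icc (k : ℝ) (k + 1)) :=
      P.continuous_aeval.continuousOn
    have hle : (k : ℝ) ≤ (k : ℝ) + 1 := by linarith
    rcases Nat.even_or_odd k with he | ho
    · have h1 : 0 < P.eval (k : ℝ) := (hrep k hk1).1 he
      have h2 : P.eval ((k : ℝ) + 1) < 0 := by
        have := (hrep (k + 1) hk2).2 (Even.add_one he)
        simpa [Nat.cast_add] using this
      have := intermediate_value_Ioo' hle hcont (a := (k:ℝ)) (b := (k:ℝ)+1)
      have h0mem : (0 : ℝ) ∈ Set.Ioo (P.eval ((k:ℝ)+1)) (P.eval (k:ℝ)) := ⟨h2, h1⟩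
      obtain ⟨x, hx, hx0⟩ := this h0mem
      exact ⟨x, hx, hx0⟩
    · have h1 : P.eval (k : ℝ) < 0 := (hrep k hk1).2 ho
      have h2 : 0 < P.eval ((k : ℝ) + 1) := by
        have := (hrep (k + 1) hk2).1 (Odd.add_one ho)
        simpa [Nat.cast_add] using this
      have := intermediate_value_Ioo hle hcont (a := (k:ℝ)) (b := (k:ℝ)+1)
      have h0mem : (0 : ℝ) ∈ Set.Ioo (P.eval (k:ℝ)) (P.eval ((k:ℝ)+1)) := ⟨h1, h2⟩
      obtain ⟨x, hx, hx0⟩ := this h0mem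
      exact ⟨x, hx, hx0⟩
  choose! r hr1 hr2 using hroot
  -- the multiset of chosen roots
  set s : Multiset ℝ := (Multiset.range n).map r with hs
  have hscard : Multiset.card s = n := by simp [hs]
  have hmono : ∀ j k, j < k → k < n → r j < r k := by
    intro j k hjk hkn
    have h1 := hr1 j (by omega)
    have h2 := hr1 k hkn
    have : r j < (j : ℝ) + 1 := h1.2
    have : (k : ℝ) < r k := h2.1
    have hjk' : (j : ℝ) + 1 ≤ (k : ℝ) := by exact_mod_cast hjk
    linarith [h1.2, h2.1]
  have hnodup : s.Nodup := by
    rw [hs]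
    refine Multiset.Nodup.map_on ?_ (Multiset.nodup_range n)
    intro j hj k hk hjk
    rw [Multiset.mem_range] at hj hk
    by_contra hne
    rcases Nat.lt_or_ge j k with h | h
    · exact absurd hjk (ne_of_lt (hmono j k h hk))
    · have : k < j := by omega
      exact absurd hjk.symm (ne_of_lt (hmono k j this hj))
  have hsub : s ≤ P.roots := by
    rw [Multiset.le_iff_subset hnodup]
    intro x hx
    rw [hs, Multiset.mem_map] at hx
    obtain ⟨k, hk, rfl⟩ := hx
    rw [Multiset.mem_range] at hk
    rw [Polynomial.mem_roots hP0]
    exact hr2 k hk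
  have hcardle : Multiset.card P.roots ≤ n := le_trans (P.card_roots' ) hdeg
  have hcard : Multiset.card P.roots = n := by
    have := Multiset.card_le_card hsub
    omega
  have hseq : P.roots = s := by
    symm
    apply Multiset.eq_of_le_of_card_le hsub
    rw [hscard, hcard]
  have hnatdeg : P.natDegree = n := by
    have := P.card_roots'
    omega
  have hrootscard : Multiset.card P.roots = P.natDegree := by rw [hcard, hnatdeg]
  -- all roots are positive
  have hrootspos : ∀ x ∈ P.roots, 0 < x := by
    intro x hx
    rw [hseq, hs, Multiset.mem_map] at hx
    obtain ⟨k, hk, rfl⟩ := hx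
    rw [Multiset.mem_range] at hk
    have := (hr1 k hk).1
    have : (0:ℝ) ≤ k := Nat.cast_nonneg k
    linarith [(hr1 k hk).1]
  have hesymm : ∀ j ≤ n, 0 < P.roots.esymm j := by
    intro j hj
    exact esymm_pos_of_pos _ hrootspos j (by rw [hcard]; exact hj)
  -- the sign of the leading coefficient
  set A : ℝ := P.leadingCoeff * (-1) ^ n with hA
  have hcoeff : ∀ i ≤ n, P.coeff i = A * (-1) ^ i * P.roots.esymm (n - i) := by
    intro i hi
    have := Polynomial.coeff_eq_esymm_roots_of_card hrootscard (k := i) (by omega)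
    rw [hnatdeg] at this
    rw [this, hA]
    have hpow : (-1 : ℝ) ^ (n - i) = (-1) ^ n * (-1) ^ i := by
      have : (-1 : ℝ) ^ (n - i) * (-1) ^ i = (-1) ^ n := by
        rw [← pow_add]; congr 1; omega
      have hi2 : ((-1 : ℝ) ^ i) * ((-1 : ℝ) ^ i) = 1 := by
        rw [← pow_add, Even.neg_one_pow ⟨i, rfl⟩]
      calc (-1 : ℝ) ^ (n - i) = ((-1:ℝ) ^ (n-i) * (-1)^i) * (-1)^i := by
            rw [mul_assoc, hi2, mul_one]
        _ = (-1) ^ n * (-1) ^ i := by rw [this]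
    rw [hpow]; ring
  have hApos : 0 < A := by
    have h00 := hcoeff 0 (by omega)
    rw [Polynomial.coeff_zero_eq_eval_zero] at h00
    have hE := hesymm n (le_refl n)
    simp only [pow_zero, mul_one, Nat.sub_zero] at h00
    rw [h00] at h0
    nlinarith [hE, h0]
  intro i hi
  have hc := hcoeff i hi
  have hE := hesymm (n - i) (by omega)
  constructor
  · intro hieven
    rw [hc, Even.neg_one_pow hieven, mul_one]
    exact mul_pos hApos hE
  · intro hiodd
    rw [hc, Odd.neg_one_pow hiodd]
    have : A * (-1) * P.roots.esymm (n - i) = -(A * P.roots.esymm (n - i)) := by ring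
    rw [this]
    exact neg_neg_of_pos (mul_pos hApos hE)
end

section
/- If P'(X₁,...,Xₙ) sign represents parity over {0,1,...,m−1}ⁿ, then deg(P') ≥ n(m−1). -/
open MvPolynomial Finset fwdDiff

/-- Iterated forward difference of a polynomial of small degree vanishes. -/
lemma fwdDiff_iter_poly_eq_zero (N : ℕ) : ∀ (p : Polynomial ℝ), p.degree < (N : ℕ) →
    ∀ y : ℝ, (fwdDiff (1:ℝ))^[N] (fun x => p.eval x) y = 0 := by
  induction N with
  | zero =>
    intro p hp y
    have : p = 0 := by
      have := Nat.WithBot.lt_zero_iff.mp (by exact_mod_cast hp)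
      rwa [Polynomial.degree_eq_bot] at this
    simp [this]
  | succ N ih =>
    intro p hp y
    rw [Function.iterate_succ_apply]
    set q : Polynomial ℝ := p.comp (Polynomial.X + Polynomial.C 1) - p with hq
    have hΔ : fwdDiff (1:ℝ) (fun x => p.eval x) = fun x => q.eval x := by
      funext x
      simp [fwdDiff, hq, Polynomial.eval_comp]
    rw [hΔ]
    apply ih
    rcases eq_or_ne p 0 with rfl | hp0
    · have : q = 0 := by simp [hq]
      rw [this, Polynomial.degree_zero]
      exact bot_lt_iff_ne_bot.mpr (by simp)
    · have hnd : (Polynomial.X + Polynomial.C (1:ℝ)).natDegree = 1 :=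
        Polynomial.natDegree_X_add_C 1
      have hc0 : p.comp (Polynomial.X + Polynomial.C 1) ≠ 0 := fun h =>
        hp0 (by simpa [Polynomial.comp_eq_zero_iff, hnd] using h)
      have hcomp : (p.comp (Polynomial.X + Polynomial.C 1)).degree = p.degree := by
        rw [Polynomial.degree_eq_natDegree hc0, Polynomial.degree_eq_natDegree hp0]
        exact_mod_cast by rw [Polynomial.natDegree_comp, hnd, mul_one]
      have hdeg : q.degree < p.degree := by
        have h2 := Polynomial.degree_sub_lt hcomp
          (fun h => hp0 (by simpa [Polynomial.comp_eq_zero_iff, hnd] using h))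
          (by rw [Polynomial.leadingCoeff_comp (by rw [hnd]; exact one_ne_zero),
                (Polynomial.monic_X_add_C (1:ℝ)).leadingCoeff, one_pow, mul_one])
        rwa [hcomp] at h2
      have hple : p.degree ≤ (N : ℕ) := Order.le_of_lt_succ (by exact_mod_cast hp)
      exact lt_of_lt_of_le hdeg hple

lemma alt_sum_pow_eq_zero (N d : ℕ) (hd : d < N) :
    ∑ k ∈ Finset.range (N + 1), (-1 : ℝ) ^ k * (N.choose k : ℝ) * (k : ℝ) ^ d = 0 := by
  have h0 : (fwdDiff (1:ℝ))^[N] (fun x : ℝ => x ^ d) 0 = 0 := by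
    have h := fwdDiff_iter_poly_eq_zero N (Polynomial.X ^ d)
      (by rw [Polynomial.degree_X_pow]; exact_mod_cast hd) 0
    simpa using h
  rw [fwdDiff_iter_eq_sum_shift] at h0
  have h1 : ∑ k ∈ Finset.range (N + 1),
      (-1 : ℝ) ^ (N - k) * (N.choose k : ℝ) * (k : ℝ) ^ d = 0 := by
    rw [← h0]
    apply Finset.sum_congr rfl
    intro k _
    ring_nf
    simp [zsmul_eq_mul]
    ring
  have h2 : ∑ k ∈ Finset.range (N + 1),
      (-1 : ℝ) ^ (N - k) * (N.choose k : ℝ) * (k : ℝ) ^ d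
      = (-1 : ℝ) ^ N * ∑ k ∈ Finset.range (N + 1),
        (-1 : ℝ) ^ k * (N.choose k : ℝ) * (k : ℝ) ^ d := by
    rw [Finset.mul_sum]
    apply Finset.sum_congr rfl
    intro k hk
    have hkN : k ≤ N := Nat.lt_succ_iff.mp (Finset.mem_range.mp hk)
    have hsq : (-1 : ℝ) ^ k * (-1 : ℝ) ^ k = 1 := by
      rw [← mul_pow]; norm_num
    have hadd : (-1 : ℝ) ^ (N - k) * (-1 : ℝ) ^ k = (-1 : ℝ) ^ N := by
      rw [← pow_add, Nat.sub_add_cancel hkN]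
    calc (-1 : ℝ) ^ (N - k) * (N.choose k : ℝ) * (k : ℝ) ^ d
        = ((-1 : ℝ) ^ (N - k) * ((-1) ^ k * (-1) ^ k)) * (N.choose k : ℝ) * (k : ℝ) ^ d := by
          rw [hsq, mul_one]
      _ = (-1 : ℝ) ^ N * ((-1 : ℝ) ^ k * (N.choose k : ℝ) * (k : ℝ) ^ d) := by
          rw [← mul_assoc ((-1 : ℝ) ^ (N - k)), hadd]; ring
  rw [h2] at h1
  rcases mul_eq_zero.mp h1 with h | h
  · exact absurd h (by positivity)
  · exact h

theorem totalDegree_of_parity_signrep (n m : ℕ) (hm : 2 ≤ m)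
    (P' : MvPolynomial (Fin n) ℝ)
    (hrep : SignRepParity n (Finset.range m) P') :
    n * (m - 1) ≤ P'.totalDegree := by
  by_contra hcon
  push_neg at hcon
  obtain ⟨N, rfl⟩ : ∃ N, m = N + 1 := ⟨m - 1, by omega⟩
  have hcon' : P'.totalDegree < n * N := by simpa using hcon
  set F : (Fin n → Fin (N + 1)) → ℝ := fun a =>
    (∏ i, ((-1 : ℝ) ^ (a i : ℕ) * (N.choose (a i) : ℝ))) *
      MvPolynomial.eval (fun i => ((a i : ℕ) : ℝ)) P' with hF
  -- positivity of each term
  have hpos : ∀ a : Fin n → Fin (N + 1), 0 < F a := by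
    intro a
    have hsplit : (∏ i, ((-1 : ℝ) ^ (a i : ℕ) * (N.choose (a i) : ℝ)))
        = (-1 : ℝ) ^ (∑ i, (a i : ℕ)) * ∏ i, (N.choose (a i) : ℝ) := by
      rw [Finset.prod_mul_distrib, Finset.prod_pow_eq_pow_sum]
    have hchoosepos : (0 : ℝ) < ∏ i, (N.choose (a i) : ℝ) := by
      apply Finset.prod_pos
      intro i _
      exact_mod_cast Nat.choose_pos (Nat.lt_succ_iff.mp (a i).isLt)
    have hmem : ∀ i, (a i : ℕ) ∈ Finset.range (N + 1) :=
      fun i => Finset.mem_range.mpr (a i).isLt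
    have hsign : 0 < (-1 : ℝ) ^ (∑ i, (a i : ℕ)) *
        MvPolynomial.eval (fun i => ((a i : ℕ) : ℝ)) P' := by
      rcases Nat.even_or_odd (∑ i, (a i : ℕ)) with he | ho
      · rw [he.neg_one_pow, one_mul]
        exact (hrep (fun i => (a i : ℕ)) hmem).1 he
      · rw [ho.neg_one_pow]
        have := (hrep (fun i => (a i : ℕ)) hmem).2 ho
        nlinarith
    rw [hF]
    simp only
    rw [hsplit]
    calc (0:ℝ) < ((-1 : ℝ) ^ (∑ i, (a i : ℕ)) *
        MvPolynomial.eval (fun i => ((a i : ℕ) : ℝ)) P') * ∏ i, (N.choose (a i) : ℝ) :=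
          mul_pos hsign hchoosepos
      _ = _ := by ring
  have hsumpos : 0 < ∑ a : Fin n → Fin (N + 1), F a :=
    Finset.sum_pos (fun a _ => hpos a) Finset.univ_nonempty
  -- the sum is zero
  have key : ∀ (f : Fin n → Fin (N + 1) → ℝ),
      ∑ a : Fin n → Fin (N + 1), ∏ i, f i (a i) = ∏ i, ∑ j : Fin (N + 1), f i j := by
    intro f
    rw [Finset.prod_univ_sum, Fintype.piFinset_univ]
  have hzero : ∑ a : Fin n → Fin (N + 1), F a = 0 := by
    calc ∑ a : Fin n → Fin (N + 1), F a
        = ∑ a : Fin n → Fin (N + 1), ∑ u ∈ P'.support, MvPolynomial.coeff u P' *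
            ∏ i, ((-1 : ℝ) ^ (a i : ℕ) * (N.choose (a i) : ℝ) * ((a i : ℕ) : ℝ) ^ u i) := by
          apply Finset.sum_congr rfl
          intro a _
          rw [hF]
          simp only
          rw [MvPolynomial.eval_eq', Finset.mul_sum]
          apply Finset.sum_congr rfl
          intro u _
          rw [Finset.prod_mul_distrib (f := fun i => (-1 : ℝ) ^ (a i : ℕ) * (N.choose (a i) : ℝ))
            (g := fun i => ((a i : ℕ) : ℝ) ^ u i)]
          ring
      _ = ∑ u ∈ P'.support, MvPolynomial.coeff u P' *
            ∏ i, ∑ j : Fin (N + 1), ((-1 : ℝ) ^ (j : ℕ) * (N.choose j : ℝ) * ((j : ℕ) : ℝ) ^ u i) := by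
          rw [Finset.sum_comm]
          apply Finset.sum_congr rfl
          intro u _
          rw [← Finset.mul_sum,
            key fun i j => (-1 : ℝ) ^ (j : ℕ) * (N.choose j : ℝ) * ((j : ℕ) : ℝ) ^ u i]
      _ = 0 := by
          apply Finset.sum_eq_zero
          intro u hu
          have husum : ∑ i, u i ≤ P'.totalDegree := by
            have h1 := MvPolynomial.le_totalDegree (p := P') hu
            rwa [Finsupp.sum_fintype _ _ (fun _ => rfl)] at h1
          have hex : ∃ i, u i < N := by
            by_contra hall
            push_neg at hall
            have : n * N ≤ ∑ i, u i := by
              calc n * N = ∑ _i : Fin n, N := by simp [mul_comm]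
                _ ≤ ∑ i, u i := Finset.sum_le_sum (fun i _ => hall i)
            omega  -- uses hcon', husum
          obtain ⟨i0, hi0⟩ := hex
          have hS : ∑ j : Fin (N + 1), ((-1 : ℝ) ^ (j : ℕ) * (N.choose j : ℝ) * ((j : ℕ) : ℝ) ^ u i0) = 0 := by
            rw [Fin.sum_univ_eq_sum_range (fun j => (-1 : ℝ) ^ j * (N.choose j : ℝ) * (j : ℝ) ^ u i0)]
            exact alt_sum_pow_eq_zero N (u i0) hi0
          rw [Finset.prod_eq_zero (Finset.mem_univ i0) hS, mul_zero]
  linarith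
end

section
/- Any univariate polynomial P(X) ∈ ℝ[X] that weakly sign represents parity over {0,1,...,m−1} has at least m−2 real roots (counted with multiplicity) in the interval (0, m−1]. -/
open Polynomial

/-- The sign of `P(a) * P(b)` is determined by the parity of the number of roots
(with multiplicity) of `P` in the open interval `(a, b)`. -/
private lemma wp_parity : ∀ (n : ℕ) (P : Polynomial ℝ) (a b : ℝ), a < b →
    P.eval a ≠ 0 → P.eval b ≠ 0 →
    (P.roots.filter (fun x => a < x ∧ x < b)).card = n →
    (0 < P.eval a * P.eval b ↔ Even n) := by
  intro n
  induction n with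
  | zero =>
    intro P a b hab ha hb hcard
    simp only [Even.zero, iff_true]
    rcases lt_trichotomy 0 (P.eval a * P.eval b) with h | h | h
    · exact h
    · exact absurd h.symm (mul_ne_zero ha hb)
    · exfalso
      have hP : P ≠ 0 := fun h0 => ha (by rw [h0]; simp)
      have hcont : ContinuousOn (fun x => P.eval x) (Set.Icc a b) :=
        P.continuous.continuousOn
      obtain ⟨c, hc, hc0⟩ : ∃ c ∈ Set.Icc a b, P.eval c = 0 := by
        rcases mul_neg_iff.mp h with ⟨hpa, hpb⟩ | ⟨hpa, hpb⟩
        · have h0mem : (0:ℝ) ∈ Set.Icc (P.eval b) (P.eval a) := ⟨hpb.le, hpa.le⟩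
          obtain ⟨c, hc1, hc2⟩ := intermediate_value_Icc' hab.le hcont h0mem
          exact ⟨c, hc1, hc2⟩
        · have h0mem : (0:ℝ) ∈ Set.Icc (P.eval a) (P.eval b) := ⟨hpa.le, hpb.le⟩
          obtain ⟨c, hc1, hc2⟩ := intermediate_value_Icc hab.le hcont h0mem
          exact ⟨c, hc1, hc2⟩
      have hca : a < c := lt_of_le_of_ne hc.1 (fun he => ha (by rw [he]; exact hc0))
      have hcb : c < b := lt_of_le_of_ne hc.2 (fun he => hb (by rw [← he]; exact hc0))
      have hmem : c ∈ P.roots.filter (fun x => a < x ∧ x < b) :=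
        Multiset.mem_filter.mpr ⟨(Polynomial.mem_roots hP).mpr hc0, hca, hcb⟩
      rw [Multiset.card_eq_zero.mp hcard] at hmem
      exact Multiset.notMem_zero c hmem
  | succ n ih =>
    intro P a b hab ha hb hcard
    have hP : P ≠ 0 := fun h0 => ha (by rw [h0]; simp)
    have hne : P.roots.filter (fun x => a < x ∧ x < b) ≠ 0 := by
      intro h; rw [h] at hcard; simp at hcard
    obtain ⟨r, hr⟩ := Multiset.exists_mem_of_ne_zero hne
    rw [Multiset.mem_filter] at hr
    obtain ⟨hrroots, har, hrb⟩ := hr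
    have hroot : P.IsRoot r := Polynomial.isRoot_of_mem_roots hrroots
    obtain ⟨Q, hQ⟩ := Polynomial.dvd_iff_isRoot.mpr hroot
    have hPQ0 : (X - C r) * Q ≠ 0 := hQ ▸ hP
    have hroots : P.roots = r ::ₘ Q.roots := by
      rw [hQ, Polynomial.roots_mul hPQ0, Polynomial.roots_X_sub_C,
        Multiset.singleton_add]
    have hfilter : P.roots.filter (fun x => a < x ∧ x < b)
        = r ::ₘ Q.roots.filter (fun x => a < x ∧ x < b) := by
      rw [hroots, Multiset.filter_cons_of_pos _ ⟨har, hrb⟩]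
    have hcard' : (Q.roots.filter (fun x => a < x ∧ x < b)).card = n := by
      rw [hfilter, Multiset.card_cons] at hcard
      omega
    have ea : P.eval a = (a - r) * Q.eval a := by rw [hQ]; simp
    have eb : P.eval b = (b - r) * Q.eval b := by rw [hQ]; simp
    have hQa : Q.eval a ≠ 0 := fun h => ha (by rw [ea, h, mul_zero])
    have hQb : Q.eval b ≠ 0 := fun h => hb (by rw [eb, h, mul_zero])
    have hih := ih Q a b hab hQa hQb hcard'
    have hfac : (a - r) * (b - r) < 0 :=
      mul_neg_of_neg_of_pos (by linarith) (by linarith)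
    have key : P.eval a * P.eval b = ((a - r) * (b - r)) * (Q.eval a * Q.eval b) := by
      rw [ea, eb]; ring
    rw [Nat.even_add_one, ← hih]
    constructor
    · intro hpos hqpos
      have : ((a - r) * (b - r)) * (Q.eval a * Q.eval b) < 0 :=
        mul_neg_of_neg_of_pos hfac hqpos
      rw [key] at hpos
      linarith
    · intro hneg
      rcases lt_or_gt_of_ne (mul_ne_zero hQa hQb) with h | h
      · rw [key]
        exact mul_pos_of_neg_of_neg hfac h
      · exact absurd h hneg

/-- If each natural number in a finset is a root of `P` satisfying `p`, the number of
roots counting multiplicity satisfying `p` is at least the cardinality of the finset. -/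
private lemma wp_int_count (P : Polynomial ℝ) (hP : P ≠ 0) (s : Finset ℕ)
    (p : ℝ → Prop) [DecidablePred p]
    (h : ∀ j ∈ s, p (j:ℝ) ∧ P.eval (j:ℝ) = 0) :
    s.card ≤ (P.roots.filter p).card := by
  classical
  have hsub : (s.image (fun j : ℕ => (j:ℝ))).val ≤ P.roots.filter p := by
    rw [Multiset.le_iff_subset (s.image _).nodup]
    intro x hx
    rw [Finset.mem_val] at hx
    obtain ⟨j, hj, rfl⟩ := Finset.mem_image.mp hx
    exact Multiset.mem_filter.mpr ⟨(Polynomial.mem_roots hP).mpr (h j hj).2, (h j hj).1⟩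
  have hcard := Multiset.card_le_card hsub
  have himg : (s.image (fun j : ℕ => (j:ℝ))).card = s.card :=
    Finset.card_image_of_injective s Nat.cast_injective
  rw [← himg]
  exact hcard

/-- Splitting a filtered count along two disjoint sub-predicates. -/
private lemma wp_split (M : Multiset ℝ) (p1 p2 q : ℝ → Prop)
    [DecidablePred p1] [DecidablePred p2] [DecidablePred q]
    (h12 : ∀ x ∈ M, ¬(p1 x ∧ p2 x)) (h1 : ∀ x, p1 x → q x) (h2 : ∀ x, p2 x → q x) :
    (M.filter p1).card + (M.filter p2).card ≤ (M.filter q).card := by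
  have e1 : M.filter p1 + M.filter p2 = M.filter (fun x => p1 x ∨ p2 x) := by
    rw [Multiset.filter_add_filter, Multiset.filter_eq_nil.mpr h12, add_zero]
  calc (M.filter p1).card + (M.filter p2).card
      = (M.filter (fun x => p1 x ∨ p2 x)).card := by rw [← Multiset.card_add, e1]
    _ ≤ (M.filter q).card :=
        Multiset.card_le_card
          (Multiset.monotone_filter_right _ (fun x hx => hx.elim (h1 x) (h2 x)))

/-- Gap lemma: if `P` has strict parity-compatible signs at naturals `a < b` and vanishes
at all naturals strictly between them, then `P` has at least `b - a` roots in `(a, b]`. -/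
private lemma wp_gap (P : Polynomial ℝ) (a b : ℕ) (hab : a < b)
    (ha : (Even a → 0 < P.eval (a:ℝ)) ∧ (Odd a → P.eval (a:ℝ) < 0))
    (hb : (Even b → 0 < P.eval (b:ℝ)) ∧ (Odd b → P.eval (b:ℝ) < 0))
    (hmid : ∀ j : ℕ, a < j → j < b → P.eval (j:ℝ) = 0) :
    b - a ≤ (P.roots.filter (fun x => (a:ℝ) < x ∧ x ≤ (b:ℝ))).card := by
  classical
  have ha0 : P.eval (a:ℝ) ≠ 0 := by
    rcases Nat.even_or_odd a with h | h
    · exact ne_of_gt (ha.1 h)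
    · exact ne_of_lt (ha.2 h)
  have hb0 : P.eval (b:ℝ) ≠ 0 := by
    rcases Nat.even_or_odd b with h | h
    · exact ne_of_gt (hb.1 h)
    · exact ne_of_lt (hb.2 h)
  have hP : P ≠ 0 := fun h0 => ha0 (by rw [h0]; simp)
  have habR : (a:ℝ) < (b:ℝ) := Nat.cast_lt.mpr hab
  have hsignprod : 0 < P.eval (a:ℝ) * P.eval (b:ℝ) ↔ Even (b - a) := by
    rw [Nat.even_sub hab.le]
    rcases Nat.even_or_odd a with hea | hoa <;> rcases Nat.even_or_odd b with heb | hob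
    · exact iff_of_true (mul_pos (ha.1 hea) (hb.1 heb)) ⟨fun _ => hea, fun _ => heb⟩
    · exact iff_of_false (not_lt.mpr (mul_nonpos_of_nonneg_of_nonpos
        (ha.1 hea).le (hb.2 hob).le))
        (fun hiff => (Nat.not_even_iff_odd.mpr hob) (hiff.mpr hea))
    · exact iff_of_false (not_lt.mpr (mul_nonpos_of_nonpos_of_nonneg
        (ha.2 hoa).le (hb.1 heb).le))
        (fun hiff => (Nat.not_even_iff_odd.mpr hoa) (hiff.mp heb))
    · exact iff_of_true (mul_pos_of_neg_of_neg (ha.2 hoa) (hb.2 hob))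
        ⟨fun heb => absurd heb (Nat.not_even_iff_odd.mpr hob),
         fun hea => absurd hea (Nat.not_even_iff_odd.mpr hoa)⟩
  have hpar := wp_parity ((P.roots.filter (fun x => (a:ℝ) < x ∧ x < (b:ℝ))).card)
    P (a:ℝ) (b:ℝ) habR ha0 hb0 rfl
  have hlow : b - a - 1 ≤ (P.roots.filter (fun x => (a:ℝ) < x ∧ x < (b:ℝ))).card := by
    have hc := wp_int_count P hP (Finset.Ioo a b) (fun x => (a:ℝ) < x ∧ x < (b:ℝ)) ?_
    · rwa [Nat.card_Ioo] at hc
    · intro j hj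
      obtain ⟨h1, h2⟩ := Finset.mem_Ioo.mp hj
      exact ⟨⟨Nat.cast_lt.mpr h1, Nat.cast_lt.mpr h2⟩, hmid j h1 h2⟩
  have heq : Even ((P.roots.filter (fun x => (a:ℝ) < x ∧ x < (b:ℝ))).card) ↔
      Even (b - a) := by rw [← hpar, hsignprod]
  have hn : b - a ≤ (P.roots.filter (fun x => (a:ℝ) < x ∧ x < (b:ℝ))).card := by
    rw [Nat.even_iff, Nat.even_iff] at heq
    omega
  refine le_trans hn (Multiset.card_le_card (Multiset.monotone_filter_right _ ?_))
  intro x hx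
  exact ⟨hx.1, hx.2.le⟩

/-- Chain lemma: between any two naturals `a ≤ b < m` with nonzero parity-compatible
values, `P` has at least `b - a` roots in `(a, b]`. -/
private lemma wp_chain (P : Polynomial ℝ) (m : ℕ)
    (hsign : ∀ k : ℕ, k < m → P.eval (k:ℝ) ≠ 0 →
      (Even k → 0 < P.eval (k:ℝ)) ∧ (Odd k → P.eval (k:ℝ) < 0)) :
    ∀ (n a b : ℕ), b - a = n → a ≤ b → b < m → P.eval (a:ℝ) ≠ 0 → P.eval (b:ℝ) ≠ 0 →
      b - a ≤ (P.roots.filter (fun x => (a:ℝ) < x ∧ x ≤ (b:ℝ))).card := by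
  intro n
  induction n using Nat.strong_induction_on with
  | _ n ih =>
    intro a b hn hab hbm ha hb
    rcases eq_or_lt_of_le hab with rfl | hlt
    · simp
    · classical
      have hex : ∃ t, a < t ∧ t ≤ b ∧ P.eval (t:ℝ) ≠ 0 := ⟨b, hlt, le_refl b, hb⟩
      obtain ⟨t, ⟨ht1, ht2, ht3⟩, htmin⟩ :
          ∃ t, (a < t ∧ t ≤ b ∧ P.eval (t:ℝ) ≠ 0) ∧
            ∀ j, j < t → ¬(a < j ∧ j ≤ b ∧ P.eval (j:ℝ) ≠ 0) :=
        ⟨Nat.find hex, Nat.find_spec hex, fun j hj => Nat.find_min hex hj⟩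
      have hmid : ∀ j : ℕ, a < j → j < t → P.eval (j:ℝ) = 0 := by
        intro j hj1 hj2
        by_contra hne
        exact htmin j hj2 ⟨hj1, by omega, hne⟩
      have hgap := wp_gap P a t ht1 (hsign a (by omega) ha) (hsign t (by omega) ht3) hmid
      rcases eq_or_lt_of_le ht2 with rfl | htb
      · exact hgap
      · have hrest := ih (b - t) (by omega) t b rfl (by omega) hbm ht3 hb
        have hsplit := wp_split P.roots
          (fun x => (a:ℝ) < x ∧ x ≤ (t:ℝ)) (fun x => (t:ℝ) < x ∧ x ≤ (b:ℝ))
          (fun x => (a:ℝ) < x ∧ x ≤ (b:ℝ))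
          (fun x _ h => absurd h.2.1 (not_lt.mpr h.1.2))
          (fun x hx => ⟨hx.1, le_trans hx.2 (Nat.cast_le.mpr ht2)⟩)
          (fun x hx => ⟨lt_trans (Nat.cast_lt.mpr ht1) hx.1, hx.2⟩)
        omega

theorem weak_parity_signrep_roots (m : ℕ) (P : Polynomial ℝ)
    (hweak : ∀ k < m, (Even k → 0 ≤ P.eval (k : ℝ)) ∧ (Odd k → P.eval (k : ℝ) ≤ 0))
    (hnz : ∃ k < m, P.eval (k : ℝ) ≠ 0) :
    m - 2 ≤ (P.roots.filter (fun x => 0 < x ∧ x ≤ (m : ℝ) - 1)).card := by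
  classical
  obtain ⟨k0, hk0m, hk0⟩ := hnz
  have hm1 : 1 ≤ m := by omega
  have hP : P ≠ 0 := fun h0 => hk0 (by rw [h0]; simp)
  have hcast : ((m - 1 : ℕ) : ℝ) = (m:ℝ) - 1 := by
    rw [Nat.cast_sub hm1, Nat.cast_one]
  have hsign : ∀ k : ℕ, k < m → P.eval (k:ℝ) ≠ 0 →
      (Even k → 0 < P.eval (k:ℝ)) ∧ (Odd k → P.eval (k:ℝ) < 0) := by
    intro k hk hne
    obtain ⟨h1, h2⟩ := hweak k hk
    exact ⟨fun he => lt_of_le_of_ne (h1 he) (Ne.symm hne),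
      fun ho => lt_of_le_of_ne (h2 ho) hne⟩
  have hex : ∃ k, k < m ∧ P.eval (k:ℝ) ≠ 0 := ⟨k0, hk0m, hk0⟩
  obtain ⟨amin, ⟨haminm, hamin0⟩, haminmin'⟩ :
      ∃ k, (k < m ∧ P.eval (k:ℝ) ≠ 0) ∧ ∀ j, j < k → ¬(j < m ∧ P.eval (j:ℝ) ≠ 0) :=
    ⟨Nat.find hex, Nat.find_spec hex, fun j hj => Nat.find_min hex hj⟩
  have haminmin : ∀ j, j < amin → P.eval (j:ℝ) = 0 := by
    intro j hj
    by_contra hne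
    exact haminmin' j hj ⟨by omega, hne⟩
  obtain ⟨amax, hamaxle, hamax0, hamaxmax⟩ :
      ∃ k, k ≤ m - 1 ∧ P.eval (k:ℝ) ≠ 0 ∧
        (∀ j, k < j → j ≤ m - 1 → P.eval (j:ℝ) = 0) := by
    refine ⟨Nat.findGreatest (fun k => P.eval (k:ℝ) ≠ 0) (m-1),
      Nat.findGreatest_le _,
      Nat.findGreatest_spec (P := fun k => P.eval (k:ℝ) ≠ 0) (show k0 ≤ m - 1 by omega) hk0, ?_⟩
    intro j h1 h2
    by_contra hne
    exact Nat.findGreatest_is_greatest h1 h2 hne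
  have hminmax : amin ≤ amax := by
    by_contra h
    push_neg at h
    exact haminmin' amax h ⟨by omega, hamax0⟩
  -- count in (0, amin]
  have c1 : amin - 1 ≤ (P.roots.filter (fun x => (0:ℝ) < x ∧ x ≤ (amin:ℝ))).card := by
    have hc := wp_int_count P hP (Finset.Ioo 0 amin)
      (fun x => (0:ℝ) < x ∧ x ≤ (amin:ℝ)) ?_
    · rwa [Nat.card_Ioo, Nat.sub_zero] at hc
    · intro j hj
      obtain ⟨h1, h2⟩ := Finset.mem_Ioo.mp hj
      exact ⟨⟨by exact_mod_cast Nat.cast_pos.mpr h1, Nat.cast_le.mpr h2.le⟩,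
        haminmin j h2⟩
  -- count in (amin, amax]
  have c2 := wp_chain P m hsign (amax - amin) amin amax rfl hminmax (by omega)
    hamin0 hamax0
  -- count in (amax, m-1]
  have c3 : (m - 1) - amax ≤
      (P.roots.filter (fun x => (amax:ℝ) < x ∧ x ≤ (m:ℝ) - 1)).card := by
    have hc := wp_int_count P hP (Finset.Ioc amax (m-1))
      (fun x => (amax:ℝ) < x ∧ x ≤ (m:ℝ) - 1) ?_
    · rwa [Nat.card_Ioc] at hc
    · intro j hj
      obtain ⟨h1, h2⟩ := Finset.mem_Ioc.mp hj
      refine ⟨⟨Nat.cast_lt.mpr h1, ?_⟩, hamaxmax j h1 h2⟩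
      rw [← hcast]
      exact Nat.cast_le.mpr h2
  have hamaxcast : (amax:ℝ) ≤ (m:ℝ) - 1 := by
    rw [← hcast]; exact Nat.cast_le.mpr hamaxle
  have hamincast : (amin:ℝ) ≤ (m:ℝ) - 1 := by
    rw [← hcast]; exact Nat.cast_le.mpr (le_trans hminmax hamaxle)
  have s2 := wp_split P.roots
    (fun x => (amin:ℝ) < x ∧ x ≤ (amax:ℝ)) (fun x => (amax:ℝ) < x ∧ x ≤ (m:ℝ) - 1)
    (fun x => (amin:ℝ) < x ∧ x ≤ (m:ℝ) - 1)
    (fun x _ h => absurd h.2.1 (not_lt.mpr h.1.2))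
    (fun x hx => ⟨hx.1, le_trans hx.2 hamaxcast⟩)
    (fun x hx => ⟨lt_of_le_of_lt (Nat.cast_le.mpr hminmax) hx.1, hx.2⟩)
  have s1 := wp_split P.roots
    (fun x => (0:ℝ) < x ∧ x ≤ (amin:ℝ)) (fun x => (amin:ℝ) < x ∧ x ≤ (m:ℝ) - 1)
    (fun x => 0 < x ∧ x ≤ (m : ℝ) - 1)
    (fun x _ h => absurd h.2.1 (not_lt.mpr h.1.2))
    (fun x hx => ⟨hx.1, le_trans hx.2 hamincast⟩)
    (fun x hx => ⟨lt_of_le_of_lt (Nat.cast_nonneg amin) hx.1, hx.2⟩)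
  omega
end

section
/- Any polynomial that weakly sign represents parity over {0,1}ⁿ has degree at least n. -/
open MvPolynomial

/-- `P` weakly sign represents the parity function over `A^n`. -/
def WeakSignRepParity (n : ℕ) (A : Finset ℕ) (P : MvPolynomial (Fin n) ℝ) : Prop :=
  (∀ a : Fin n → ℕ, (∀ i, a i ∈ A) →
    (Even (∑ i, a i) → 0 ≤ MvPolynomial.eval (fun i => (a i : ℝ)) P) ∧
    (Odd (∑ i, a i) → MvPolynomial.eval (fun i => (a i : ℝ)) P ≤ 0)) ∧
  (∃ a : Fin n → ℕ, (∀ i, a i ∈ A) ∧ MvPolynomial.eval (fun i => (a i : ℝ)) P ≠ 0)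

theorem weak_parity_signrep_degree (n : ℕ) (P : MvPolynomial (Fin n) ℝ)
    (hrep : WeakSignRepParity n {0, 1} P) :
    n ≤ P.totalDegree := by
  by_contra hlt
  push_neg at hlt
  obtain ⟨hsign, a₀, ha₀, hne⟩ := hrep
  set f : (Fin n → Fin 2) → ℝ := fun a =>
    (-1 : ℝ) ^ (∑ i, (a i : ℕ)) * MvPolynomial.eval (fun i => ((a i : ℕ) : ℝ)) P with hf
  -- each term is nonnegative
  have hterm_nonneg : ∀ a : Fin n → Fin 2, 0 ≤ f a := by
    intro a
    have hmem : ∀ i, ((a i : ℕ)) ∈ ({0, 1} : Finset ℕ) := by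
      intro i
      have := (a i).is_lt
      simp only [Finset.mem_insert, Finset.mem_singleton]
      omega
    obtain ⟨he, ho⟩ := hsign (fun i => (a i : ℕ)) hmem
    rcases Nat.even_or_odd (∑ i, (a i : ℕ)) with h | h
    · rw [hf]; simp only [h.neg_one_pow, one_mul]; exact he h
    · rw [hf]; simp only [h.neg_one_pow]; nlinarith [ho h]
  -- a witness term is positive
  set b : Fin n → Fin 2 := fun i => if a₀ i = 0 then 0 else 1 with hbdef
  have hb : ∀ i, ((b i : ℕ)) = a₀ i := by
    intro i
    have := ha₀ i
    simp only [Finset.mem_insert, Finset.mem_singleton] at this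
    rcases this with h | h <;> simp [hbdef, h]
  have hbpos : 0 < f b := by
    have h1 : f b ≠ 0 := by
      rw [hf]
      simp only [hb]
      intro h
      rcases mul_eq_zero.1 h with h | h
      · exact absurd h (by positivity)
      · exact hne h
    exact lt_of_le_of_ne (hterm_nonneg b) (Ne.symm h1)
  have hSpos : 0 < ∑ a : Fin n → Fin 2, f a :=
    Finset.sum_pos' (fun a _ => hterm_nonneg a) ⟨b, Finset.mem_univ b, hbpos⟩
  -- but the sum is zero since deg P < n
  have hS0 : ∑ a : Fin n → Fin 2, f a = 0 := by
    have hfa : ∀ a : Fin n → Fin 2, f a =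
        ∑ m ∈ P.support, MvPolynomial.coeff m P *
          ∏ i, ((-1 : ℝ) ^ (a i : ℕ) * ((a i : ℕ) : ℝ) ^ m i) := by
      intro a
      simp only [hf]
      rw [MvPolynomial.eval_eq', Finset.mul_sum]
      refine Finset.sum_congr rfl fun m _ => ?_
      rw [Finset.prod_mul_distrib, Finset.prod_pow_eq_pow_sum]
      ring
    calc ∑ a : Fin n → Fin 2, f a
        = ∑ m ∈ P.support, ∑ a : Fin n → Fin 2, MvPolynomial.coeff m P *
            ∏ i, ((-1 : ℝ) ^ (a i : ℕ) * ((a i : ℕ) : ℝ) ^ m i) := by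
          rw [Finset.sum_congr rfl fun a _ => hfa a, Finset.sum_comm]
      _ = ∑ m ∈ P.support, MvPolynomial.coeff m P *
            ∏ i, ∑ c : Fin 2, ((-1 : ℝ) ^ (c : ℕ) * ((c : ℕ) : ℝ) ^ m i) := by
          refine Finset.sum_congr rfl fun m _ => ?_
          rw [← Finset.mul_sum, Finset.prod_univ_sum, Fintype.piFinset_univ]
      _ = 0 := by
          refine Finset.sum_eq_zero fun m hm => ?_
          -- find a coordinate where m is zero
          have hdeg : ∑ i, m i < n := by
            have h1 : (m.sum fun _ e => e) ≤ P.totalDegree := MvPolynomial.le_totalDegree hm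
            have h2 : (m.sum fun _ e => e) = ∑ i, m i := by
              rw [Finsupp.sum_fintype]
              intro; rfl
            omega
          have : ∃ i, m i = 0 := by
            by_contra hno
            push_neg at hno
            have : (n : ℕ) = ∑ _i : Fin n, 1 := by simp
            have hle : ∑ _i : Fin n, 1 ≤ ∑ i, m i :=
              Finset.sum_le_sum fun i _ => Nat.one_le_iff_ne_zero.2 (hno i)
            omega
          obtain ⟨i, hi⟩ := this
          have hzero : (∑ c : Fin 2, ((-1 : ℝ) ^ (c : ℕ) * ((c : ℕ) : ℝ) ^ m i)) = 0 := by
            rw [Fin.sum_univ_two, hi]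
            norm_num
          rw [Finset.prod_eq_zero (Finset.mem_univ i) hzero, mul_zero]
  linarith
end

section
/- If P(X₁,...,Xₙ) weakly sign represents parity over {0,...,m−1}ⁿ and deg_i(P) ≤ m−1 for each variable, then P has sparsity at least (m−1)ⁿ. -/
open MvPolynomial

/-!
If the support of `P` has fewer than `(m - 1) ^ n` monomials, some `X^w` with
`1 ≤ wᵢ ≤ m - 1` has coefficient zero. Let `L_b` be the Lagrange basis polynomial of the node `b`
among `0, …, m - 1`. As `deg_i P < m`, the grid weights `μ(a) = ∏ᵢ [X^{wᵢ}] L_{aᵢ}` satisfy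
`∑ₐ μ(a) P(a) = coeff_w P = 0`, and for `wᵢ ≥ 1` the weight `μ(a)` is nonzero with sign
`(-1)^(|a| + |w|)`. Thus `(-1)^|w| μ(a) P(a) ≥ 0` at every grid point `a`; as these terms sum
to zero, `P` vanishes on the whole grid.
-/

open Finset

theorem Lagrange.sum_pow_mul_coeff_basis {F ι : Type*} [Field F] [DecidableEq ι] {s : Finset ι}
    {v : ι → F} (hvs : Set.InjOn v s) {k : ℕ} (hk : k < #s) (w : ℕ) :
    ∑ b ∈ s, v b ^ k * (Lagrange.basis s v b).coeff w = if k = w then 1 else 0 := by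
  have hdeg : (Polynomial.X ^ k : Polynomial F).degree < #s := by
    rw [Polynomial.degree_X_pow]; exact_mod_cast hk
  have := congrArg (Polynomial.coeff · w) (Lagrange.eq_interpolate hvs hdeg)
  simpa only [Lagrange.interpolate_apply, Polynomial.finsetSum_coeff, Polynomial.coeff_C_mul,
    Polynomial.eval_pow, Polynomial.eval_X, Polynomial.coeff_X_pow, eq_comm] using this.symm

theorem MvPolynomial.sum_prod_coeff_basis_mul_eval {F ι σ : Type*} [Field F] [DecidableEq ι]
    [Fintype σ] [DecidableEq σ] {s : Finset ι} {v : ι → F} (hvs : Set.InjOn v s)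
    {P : MvPolynomial σ F} (hdeg : ∀ i, P.degreeOf i < #s) (w : σ →₀ ℕ) :
    ∑ a ∈ Fintype.piFinset fun _ => s,
      (∏ i, (Lagrange.basis s v (a i)).coeff (w i)) * eval (fun i => v (a i)) P = P.coeff w := by
  have hmoment (d) (hd : d ∈ P.support) :
      ∑ a ∈ Fintype.piFinset fun _ => s,
        ∏ i, v (a i) ^ d i * (Lagrange.basis s v (a i)).coeff (w i) = if d = w then 1 else 0 := by
    rw [sum_prod_piFinset s fun i b => v b ^ d i * (Lagrange.basis s v b).coeff (w i)]
    simp_rw [Lagrange.sum_pow_mul_coeff_basis hvs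
      ((monomial_le_degreeOf _ hd).trans_lt (hdeg _)), Fintype.prod_boole, ← Finsupp.ext_iff]
  calc _ = ∑ d ∈ P.support, P.coeff d * ∑ a ∈ Fintype.piFinset fun _ => s,
          ∏ i, v (a i) ^ d i * (Lagrange.basis s v (a i)).coeff (w i) := by
        simp_rw [eval_eq', mul_sum, prod_mul_distrib]
        rw [sum_comm]
        refine sum_congr rfl fun d _ => sum_congr rfl fun a _ => ?_
        ring
    _ = P.coeff w := by
        rw [sum_congr rfl fun d hd => by rw [hmoment d hd]]
        simp only [mul_ite, mul_one, mul_zero, sum_ite_eq']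
        split_ifs with h
        · rfl
        · exact (notMem_support_iff.1 h).symm

section LagrangeBasisSign

variable {K : Type*} [Field K] [LinearOrder K] [IsStrictOrderedRing K]

theorem neg_one_pow_mul_coeff_prod_X_sub_natCast_pos (E : Finset ℕ) {w : ℕ} (hw₀ : 1 ≤ w)
    (hw : w ≤ #E) :
    0 < (-1) ^ (#E - w) * (∏ j ∈ E, (Polynomial.X - Polynomial.C (j : K))).coeff w := by
  have hcoeff := E.prod_X_add_C_coeff (fun j => -(j : K)) hw
  simp only [map_neg, ← sub_eq_add_neg] at hcoeff
  rw [hcoeff, mul_sum]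
  have hsign (t) (ht : t ∈ E.powersetCard (#E - w)) :
      (-1) ^ (#E - w) * ∏ j ∈ t, -(j : K) = ∏ j ∈ t, (j : K) := by
    rw [prod_neg, (mem_powersetCard.1 ht).2, ← mul_assoc, ← mul_pow]
    simp
  rw [sum_congr rfl hsign]
  have hcard : #E - w ≤ #(E.erase 0) := by
    have := pred_card_le_card_erase (s := E) (a := 0)
    omega
  obtain ⟨t, htE, htcard⟩ := exists_subset_card_eq hcard
  refine sum_pos' (fun t _ => prod_nonneg fun j _ => j.cast_nonneg)
    ⟨t, mem_powersetCard.2 ⟨htE.trans (erase_subset _ _), htcard⟩, prod_pos fun j hj => ?_⟩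
  exact Nat.cast_pos.2 (Nat.pos_of_ne_zero (ne_of_mem_erase (htE hj)))

theorem neg_one_pow_mul_prod_erase_sub_natCast_pos {b m : ℕ} (hb : b < m) :
    0 < (-1) ^ (m - 1 - b) * ∏ j ∈ (range m).erase b, ((b : K) - j) := by
  induction m, hb using Nat.le_induction with
  | base =>
    rw [range_add_one, erase_insert notMem_range_self, Nat.add_one_sub_one, Nat.sub_self,
      pow_zero, one_mul]
    exact prod_pos fun j hj => sub_pos.2 (Nat.cast_lt.2 (mem_range.1 hj))
  | succ m hbm ih =>
    have hmb : b < m := hbm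
    rw [range_add_one, erase_insert_of_ne hmb.ne',
      prod_insert fun h => notMem_range_self (mem_of_mem_erase h),
      show m + 1 - 1 - b = m - 1 - b + 1 by omega]
    calc (0 : K) < ((-1) ^ (m - 1 - b) * ∏ j ∈ (range m).erase b, ((b : K) - j)) * (m - b) :=
          mul_pos ih (sub_pos.2 (Nat.cast_lt.2 hmb))
      _ = _ := by ring

theorem neg_one_pow_mul_coeff_basis_range_pos {m b w : ℕ} (hb : b < m) (hw₀ : 1 ≤ w)
    (hw : w < m) :
    0 < (-1) ^ (b + w) * (Lagrange.basis (range m) (fun j : ℕ => (j : K)) b).coeff w := by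
  set E := (range m).erase b
  have hE : #E = m - 1 := by rw [card_erase_of_mem (mem_range.2 hb), card_range]
  have hbasis : Lagrange.basis (range m) (fun j : ℕ => (j : K)) b
      = Polynomial.C (∏ j ∈ E, ((b : K) - j))⁻¹ *
          ∏ j ∈ E, (Polynomial.X - Polynomial.C (j : K)) := by
    rw [Lagrange.basis, ← prod_inv_distrib, map_prod, ← prod_mul_distrib]
    rfl
  have hparity : ((-1) ^ (b + w) : K) = (-1) ^ (m - 1 - b) * (-1) ^ (#E - w) := by
    rw [← pow_add, hE, neg_one_pow_eq_pow_mod_two, neg_one_pow_eq_pow_mod_two (n := _ + _)]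
    congr 1
    omega
  have hden := neg_one_pow_mul_prod_erase_sub_natCast_pos (K := K) hb
  have hnum := neg_one_pow_mul_coeff_prod_X_sub_natCast_pos (K := K) E hw₀ (by omega)
  calc (0 : K) < ((-1) ^ (m - 1 - b) * ∏ j ∈ E, ((b : K) - j))⁻¹ *
        ((-1) ^ (#E - w) * (∏ j ∈ E, (Polynomial.X - Polynomial.C (j : K))).coeff w) :=
          mul_pos (inv_pos.2 hden) hnum
    _ = _ := by
      rw [hbasis, Polynomial.coeff_C_mul, hparity, mul_inv, ← inv_pow, inv_neg_one]
      ring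

theorem neg_one_pow_mul_prod_coeff_basis_range_pos {σ : Type*} [Fintype σ] {m : ℕ}
    {a w : σ → ℕ} (ha : ∀ i, a i < m) (hw₀ : ∀ i, 1 ≤ w i) (hw : ∀ i, w i < m) :
    0 < (-1) ^ (∑ i, (a i + w i)) *
      ∏ i, (Lagrange.basis (range m) (fun j : ℕ => (j : K)) (a i)).coeff (w i) := by
  rw [← prod_pow_eq_pow_sum, ← prod_mul_distrib]
  exact prod_pos fun i _ => neg_one_pow_mul_coeff_basis_range_pos (ha i) (hw₀ i) (hw i)

end LagrangeBasisSign

theorem MvPolynomial.exists_coeff_eq_zero_of_card_support_lt {R σ : Type*} [CommSemiring R]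
    [Fintype σ] [DecidableEq σ] (P : MvPolynomial σ R) (t : σ → Finset ℕ)
    (h : #P.support < ∏ i, #(t i)) : ∃ w : σ →₀ ℕ, (∀ i, w i ∈ t i) ∧ P.coeff w = 0 := by
  set T := (Fintype.piFinset t).map Finsupp.equivFunOnFinite.symm.toEmbedding
  have hT : #T = ∏ i, #(t i) := by rw [card_map, Fintype.card_piFinset]
  obtain ⟨w, hwT, hw⟩ := exists_mem_notMem_of_card_lt_card (hT ▸ h)
  obtain ⟨f, hf, rfl⟩ := mem_map.1 hwT
  exact ⟨_, Fintype.mem_piFinset.1 hf, notMem_support_iff.1 hw⟩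

theorem Finset.eq_zero_of_sum_mul_eq_zero {ι K : Type*} [Ring K] [LinearOrder K]
    [IsStrictOrderedRing K] {s : Finset ι} {c f : ι → K} (hc : ∀ a ∈ s, 0 < c a)
    (hf : ∀ a ∈ s, 0 ≤ f a) (h : ∑ a ∈ s, c a * f a = 0) {a : ι} (ha : a ∈ s) : f a = 0 :=
  (mul_eq_zero.1 ((sum_eq_zero_iff_of_nonneg fun b hb => mul_nonneg (hc b hb).le (hf b hb)).1 h
    a ha)).resolve_left (hc a ha).ne'

theorem WeakSignRepParity.neg_one_pow_mul_eval_nonneg {n : ℕ} {A : Finset ℕ}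
    {P : MvPolynomial (Fin n) ℝ} (h : WeakSignRepParity n A P) {a : Fin n → ℕ}
    (ha : ∀ i, a i ∈ A) : 0 ≤ (-1) ^ (∑ i, a i) * eval (fun i => (a i : ℝ)) P := by
  rcases Nat.even_or_odd (∑ i, a i) with heven | hodd
  · rw [heven.neg_one_pow, one_mul]
    exact (h.1 a ha).1 heven
  · rw [hodd.neg_one_pow, neg_one_mul, neg_nonneg]
    exact (h.1 a ha).2 hodd

theorem weak_parity_signrep_sparsity_general (n m : ℕ)
    (P : MvPolynomial (Fin n) ℝ)
    (hdeg : ∀ i, P.degreeOf i ≤ m - 1)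
    (hrep : WeakSignRepParity n (Finset.range m) P) :
    (m - 1) ^ n ≤ P.support.card := by
  by_contra! hcard
  obtain ⟨w, hw, hPw⟩ := P.exists_coeff_eq_zero_of_card_support_lt (fun _ => Icc 1 (m - 1))
    (by simpa using hcard)
  have hw₀ (i) : 1 ≤ w i := (mem_Icc.1 (hw i)).1
  have hwm (i) : w i < m := by have := mem_Icc.1 (hw i); omega
  obtain ⟨a₀, ha₀, hPa₀⟩ := hrep.2
  have hdeg' (i) : P.degreeOf i < #(range m) := by
    have := mem_range.1 (ha₀ i); rw [card_range]; have := hdeg i; omega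
  set μ : (Fin n → ℕ) → ℝ := fun a =>
    ∏ i, (Lagrange.basis (range m) (fun j : ℕ => (j : ℝ)) (a i)).coeff (w i)
  have hsum : ∑ a ∈ Fintype.piFinset fun _ => range m,
      ((-1) ^ (∑ i, (a i + w i)) * μ a) *
        ((-1) ^ (∑ i, a i) * eval (fun i => (a i : ℝ)) P) = 0 := by
    have hμ : ∑ a ∈ Fintype.piFinset fun _ => range m, μ a * eval (fun i => (a i : ℝ)) P = 0 :=
      (sum_prod_coeff_basis_mul_eval Nat.cast_injective.injOn hdeg' w).trans hPw
    rw [← mul_zero ((-1 : ℝ) ^ ∑ i, w i), ← hμ, mul_sum]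
    refine sum_congr rfl fun a _ => ?_
    have hsq : ((-1 : ℝ) ^ ∑ i, a i) ^ 2 = 1 := by
      rw [← pow_mul]; exact (even_two.mul_left _).neg_one_pow
    rw [sum_add_distrib, pow_add]
    linear_combination ((-1) ^ (∑ i, w i) * μ a * eval (fun i => (a i : ℝ)) P) * hsq
  have hvanish := eq_zero_of_sum_mul_eq_zero
    (fun a ha => neg_one_pow_mul_prod_coeff_basis_range_pos
      (fun i => mem_range.1 (Fintype.mem_piFinset.1 ha i)) hw₀ hwm)
    (fun a ha => hrep.neg_one_pow_mul_eval_nonneg (Fintype.mem_piFinset.1 ha))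
    hsum (Fintype.mem_piFinset.2 ha₀)
  exact hPa₀ ((mul_eq_zero.1 hvanish).resolve_left (pow_ne_zero _ (neg_ne_zero.2 one_ne_zero)))

theorem weak_parity_signrep_sparsity (n m : ℕ) (hm : 2 ≤ m)
    (P : MvPolynomial (Fin n) ℝ)
    (hdeg : ∀ i, P.degreeOf i ≤ m - 1)
    (hrep : WeakSignRepParity n (Finset.range m) P) :
    (m - 1) ^ n ≤ P.support.card :=
  weak_parity_signrep_sparsity_general n m P hdeg hrep
end

section
/- For every m ≥ 2 and n ≥ 1, there exists a polynomial P(X₁,...,Xₙ) that weakly sign represents parity over {0,...,m−1}ⁿ with deg_i(P) ≤ m−1 for all i and sparsity exactly (m−1)ⁿ. (E.g., P = Q·∏Xᵢ where Q sign represents parity on {1,...,m−1}ⁿ with per-variable degree ≤ m−2 and sparsity (m−1)ⁿ.) -/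
/-!
Let `g = c · X · ∏_{k=2}^{m-1} (X - k)`, with `c` chosen so that `g(1) = -1`; it vanishes at
`0, 2, …, m-1`. Then `P = ∏ᵢ g(Xᵢ)` is `(-1)ⁿ` at `(1, …, 1)` and `0` elsewhere on
`{0, …, m-1}ⁿ`, so it weakly sign represents parity. The monomials of `P` are the products of
monomials of the `g(Xᵢ)`, and `g` has exactly `m - 1` nonzero coefficients since the coefficients
of a product of factors `X - r` with `r > 0` alternate strictly in sign.
-/

open MvPolynomial

open Finset

namespace Polynomial

theorem coeff_prod_X_sub_C_ne_zero_iff {R ι : Type*} [CommRing R] [LinearOrder R]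
    [IsStrictOrderedRing R] (s : Finset ι) (r : ι → R) (hr : ∀ i ∈ s, 0 < r i) {k : ℕ} :
    (∏ i ∈ s, (X - C (r i))).coeff k ≠ 0 ↔ k ≤ #s := by
  constructor
  · contrapose!
    intro hk
    exact coeff_eq_zero_of_natDegree_lt (by rwa [natDegree_finsetProd_X_sub_C_eq_card])
  · intro hk
    have hcoeff := Multiset.prod_X_sub_C_coeff (s.val.map r) (k := k) (by simpa using hk)
    rw [Multiset.map_map, Finset.esymm_map_val, Multiset.card_map] at hcoeff
    change (∏ i ∈ s, (X - C (r i))).coeff k = _ at hcoeff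
    rw [hcoeff]
    refine mul_ne_zero (pow_ne_zero _ (neg_ne_zero.2 one_ne_zero)) (sum_pos ?_ ?_).ne'
    · exact fun t ht => prod_pos fun i hi => hr i (mem_powersetCard.1 ht |>.1 hi)
    · exact powersetCard_nonempty.2 (Nat.sub_le _ _)

end Polynomial

namespace MvPolynomial

theorem aeval_X_eq_sum_monomial {R σ : Type*} [CommSemiring R] (i : σ) (p : Polynomial R) :
    Polynomial.aeval (X i : MvPolynomial σ R) p =
      ∑ j ∈ p.support, monomial (Finsupp.single i j) (p.coeff j) := by
  conv_lhs => rw [p.as_sum_support_C_mul_X_pow]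
  simp [C_mul_X_pow_eq_monomial]

variable {R σ : Type*} [CommSemiring R] [Fintype σ] (g : σ → Polynomial R)

theorem eval_prod_aeval_X (x : σ → R) :
    eval x (∏ i, Polynomial.aeval (X i : MvPolynomial σ R) (g i)) = ∏ i, (g i).eval (x i) := by
  rw [map_prod]
  refine prod_congr rfl fun i _ => ?_
  simpa [Polynomial.coe_aeval_eq_eval] using
    (Polynomial.aeval_algHom_apply (aeval x) (X i) (g i)).symm

variable [DecidableEq σ]

theorem prod_aeval_X_eq_sum_monomial :
    ∏ i, Polynomial.aeval (X i : MvPolynomial σ R) (g i) =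
      ∑ d ∈ Fintype.piFinset fun i => (g i).support,
        monomial (Finsupp.equivFunOnFinite.symm d) (∏ i, (g i).coeff (d i)) := by
  simp_rw [aeval_X_eq_sum_monomial, prod_univ_sum, ← monomial_sum_prod,
    Finsupp.equivFunOnFinite_symm_eq_sum]

theorem coeff_prod_aeval_X (s : σ →₀ ℕ) :
    coeff s (∏ i, Polynomial.aeval (X i : MvPolynomial σ R) (g i)) = ∏ i, (g i).coeff (s i) := by
  rw [prod_aeval_X_eq_sum_monomial, coeff_sum]
  simp_rw [coeff_monomial, Equiv.symm_apply_eq]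
  rw [sum_ite_eq']
  split_ifs with hs
  · rfl
  · obtain ⟨i, hi⟩ := not_forall.1 (Fintype.mem_piFinset.not.1 hs)
    exact (prod_eq_zero (mem_univ i) (Polynomial.notMem_support_iff.1 hi)).symm

theorem degreeOf_prod_aeval_X_le (i : σ) :
    degreeOf i (∏ j, Polynomial.aeval (X j : MvPolynomial σ R) (g j)) ≤ (g i).natDegree := by
  refine degreeOf_le_iff.2 fun s hs => Polynomial.le_natDegree_of_ne_zero ?_
  rw [mem_support_iff, coeff_prod_aeval_X] at hs
  exact fun h => hs (prod_eq_zero (mem_univ i) h)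

theorem support_prod_aeval_X [NoZeroDivisors R] [Nontrivial R] :
    (∏ i, Polynomial.aeval (X i : MvPolynomial σ R) (g i)).support =
      (Fintype.piFinset fun i => (g i).support).map Finsupp.equivFunOnFinite.symm.toEmbedding := by
  ext s
  simp [coeff_prod_aeval_X, prod_ne_zero_iff]

theorem card_support_prod_aeval_X [NoZeroDivisors R] [Nontrivial R] :
    #(∏ i, Polynomial.aeval (X i : MvPolynomial σ R) (g i)).support = ∏ i, #(g i).support := by
  rw [support_prod_aeval_X, card_map, Fintype.card_piFinset]

end MvPolynomial

namespace Polynomial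

noncomputable def vanishingOffOne (m : ℕ) : ℝ[X] :=
  X * ∏ k ∈ Icc 2 (m - 1), (X - C (k : ℝ))

noncomputable def parityFactor (m : ℕ) : ℝ[X] :=
  C (-(eval 1 (vanishingOffOne m))⁻¹) * vanishingOffOne m

theorem eval_natCast_vanishingOffOne_eq_zero_iff {m a : ℕ} (ha : a < m) :
    eval (a : ℝ) (vanishingOffOne m) = 0 ↔ a ≠ 1 := by
  simp only [vanishingOffOne, eval_mul, eval_X, eval_prod, eval_sub, eval_C, mul_eq_zero,
    prod_eq_zero_iff, sub_eq_zero, Nat.cast_inj, Nat.cast_eq_zero, mem_Icc]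
  constructor
  · rintro (h | ⟨k, hk, rfl⟩) <;> omega
  · intro h
    by_cases h0 : a = 0
    · exact .inl h0
    · exact .inr ⟨a, by omega, rfl⟩

theorem eval_natCast_parityFactor {m a : ℕ} (ha : a < m) :
    eval (a : ℝ) (parityFactor m) = if a = 1 then -1 else 0 := by
  rw [parityFactor, eval_mul, eval_C]
  split_ifs with h1
  · subst h1
    have hone := (eval_natCast_vanishingOffOne_eq_zero_iff ha).not.2 (not_not.2 rfl)
    rw [Nat.cast_one] at hone ⊢
    field_simp
  · rw [(eval_natCast_vanishingOffOne_eq_zero_iff ha).2 h1, mul_zero]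

theorem support_parityFactor {m : ℕ} (hm : 2 ≤ m) : (parityFactor m).support = Icc 1 (m - 1) := by
  have hc : -(eval 1 (vanishingOffOne m))⁻¹ ≠ 0 := by
    simpa using (eval_natCast_vanishingOffOne_eq_zero_iff (a := 1) hm).not
  ext j
  rw [mem_support_iff, parityFactor, coeff_C_mul, mul_ne_zero_iff, and_iff_right hc,
    vanishingOffOne, mem_Icc]
  rcases j with _ | j
  · simp
  · rw [coeff_X_mul, coeff_prod_X_sub_C_ne_zero_iff _ _ fun k hk =>
      Nat.cast_pos.2 (by rw [mem_Icc] at hk; omega), Nat.card_Icc]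
    omega

theorem natDegree_parityFactor_le {m : ℕ} (hm : 2 ≤ m) : (parityFactor m).natDegree ≤ m - 1 :=
  natDegree_le_iff_coeff_eq_zero.2 fun N hN => notMem_support_iff.1 <| by
    rw [support_parityFactor hm, mem_Icc]; omega

end Polynomial


theorem weakSignRepParity_of_eval_eq_ite {n : ℕ} {A : Finset ℕ} {P : MvPolynomial (Fin n) ℝ}
    (hA : 1 ∈ A) (hP : ∀ a : Fin n → ℕ, (∀ i, a i ∈ A) →
      MvPolynomial.eval (fun i => (a i : ℝ)) P = if a = 1 then (-1 : ℝ) ^ n else 0) :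
    WeakSignRepParity n A P := by
  refine ⟨fun a ha => ?_, ⟨1, fun _ => hA, ?_⟩⟩
  · rw [hP a ha]
    split_ifs with h1
    · subst h1
      simp only [Pi.one_apply, sum_const, card_univ, Fintype.card_fin, smul_eq_mul, mul_one]
      exact ⟨fun h => by rw [h.neg_one_pow]; exact zero_le_one,
        fun h => by rw [h.neg_one_pow]; exact neg_one_lt_zero.le⟩
    · exact ⟨fun _ => le_rfl, fun _ => le_rfl⟩
  · rw [hP 1 fun _ => hA, if_pos rfl]
    exact pow_ne_zero _ (neg_ne_zero.2 one_ne_zero)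

theorem weak_parity_signrep_sparsity_tight_general (n m : ℕ) (hm : 2 ≤ m) :
    ∃ P : MvPolynomial (Fin n) ℝ,
      WeakSignRepParity n (Finset.range m) P ∧
      (∀ i, P.degreeOf i ≤ m - 1) ∧
      P.support.card = (m - 1) ^ n := by
  refine ⟨∏ i, Polynomial.aeval (X i) (Polynomial.parityFactor m), ?_,
    fun i => (degreeOf_prod_aeval_X_le _ i).trans (Polynomial.natDegree_parityFactor_le hm), ?_⟩
  · refine weakSignRepParity_of_eval_eq_ite (mem_range.2 (by omega)) fun a ha => ?_
    simp_rw [eval_prod_aeval_X, Polynomial.eval_natCast_parityFactor (mem_range.1 (ha _)),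
      Fintype.prod_ite_zero, prod_const, card_univ, Fintype.card_fin, funext_iff, Pi.one_apply]
  · rw [card_support_prod_aeval_X, Polynomial.support_parityFactor hm, Nat.card_Icc, prod_const,
      card_univ, Fintype.card_fin, Nat.add_sub_cancel]

theorem weak_parity_signrep_sparsity_tight (n m : ℕ) (hm : 2 ≤ m) (hn : 1 ≤ n) :
    ∃ P : MvPolynomial (Fin n) ℝ,
      WeakSignRepParity n (Finset.range m) P ∧
      (∀ i, P.degreeOf i ≤ m - 1) ∧
      P.support.card = (m - 1) ^ n :=
  weak_parity_signrep_sparsity_tight_general n m hm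
end

section
/- If P(X₁,...,Xₙ) weakly sign represents parity over {1,...,m}ⁿ with deg_i(P) ≤ m−1 for every i, then P has sparsity at least mⁿ. -/
open MvPolynomial

open Polynomial in
/-- Univariate dual weights: for each `α < m` there are weights `c j`, `j ∈ [1,m]`,
with sign `(-1)^(j+α+1)`, extracting the `α`-th coefficient of any polynomial of
degree `< m` from its values on `[1,m]`. -/
lemma exists_dual_weights (m α : ℕ) (hm : 1 ≤ m) (hα : α < m) :
    ∃ c : ℕ → ℝ,
      (∀ j ∈ Finset.Icc 1 m, 0 < (-1 : ℝ) ^ (j + α + 1) * c j) ∧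
      (∀ β < m, ∑ j ∈ Finset.Icc 1 m, c j * (j : ℝ) ^ β = if β = α then 1 else 0) := by
  set s : Finset ℕ := Finset.Icc 1 m with hs
  set v : ℕ → ℝ := fun k => (k : ℝ) with hv
  have hcard : s.card = m := by simp [hs]
  have hvs : Set.InjOn v s := fun a _ b _ h => Nat.cast_injective h
  refine ⟨fun j => (Lagrange.basis s v j).coeff α, ?_, ?_⟩
  · intro j hj
    obtain ⟨hj1, hjm⟩ := Finset.mem_Icc.mp hj
    set e : Finset ℕ := s.erase j with he
    have hecard : e.card = m - 1 := by rw [he, Finset.card_erase_of_mem hj, hcard]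
    -- the basis polynomial as a scalar times a monic product
    have hbasis : Lagrange.basis s v j
        = Polynomial.C (∏ k ∈ e, ((j : ℝ) - (k : ℝ))⁻¹) * ∏ k ∈ e, (Polynomial.X - Polynomial.C (k : ℝ)) := by
      rw [Lagrange.basis, map_prod, ← Finset.prod_mul_distrib]
      exact Finset.prod_congr rfl fun k _ => rfl
    -- coefficient of the monic product via Vieta
    set S : ℝ := ∑ t ∈ e.powersetCard (m - 1 - α), ∏ k ∈ t, (k : ℝ) with hS
    have hαe : α ≤ m - 1 := by omega
    have hcoeffprod : (∏ k ∈ e, (Polynomial.X - Polynomial.C (k : ℝ))).coeff α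
        = (-1 : ℝ) ^ (m - 1 - α) * S := by
      have h1 : (∏ k ∈ e, (Polynomial.X - Polynomial.C (k : ℝ)))
          = ((e.val.map v).map fun t => Polynomial.X - Polynomial.C t).prod := by
        rw [Multiset.map_map, Finset.prod_eq_multiset_prod]
        rfl
      have h2 : α ≤ Multiset.card (e.val.map v) := by
        rw [Multiset.card_map]
        simpa [hecard] using hαe
      have h3 : Multiset.card (e.val.map v) = m - 1 := by
        rw [Multiset.card_map]; exact hecard
      rw [h1, Multiset.prod_X_sub_C_coeff _ h2, h3, Finset.esymm_map_val]
    have hSpos : 0 < S := by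
      rw [hS]
      refine Finset.sum_pos (fun t ht => ?_) ?_
      · refine Finset.prod_pos fun k hk => ?_
        have hke : k ∈ e := Finset.mem_powersetCard.mp ht |>.1 hk
        have hk1 : 1 ≤ k := (Finset.mem_Icc.mp (Finset.mem_of_mem_erase hke)).1
        exact_mod_cast hk1
      · exact Finset.powersetCard_nonempty.mpr (by omega)
    -- sign of the denominator product
    set D : ℝ := ∏ k ∈ e, ((j : ℝ) - (k : ℝ)) with hD
    have hDsign : 0 < (-1 : ℝ) ^ (m - j) * D := by
      have hsplit := (Finset.prod_filter_mul_prod_filter_not e (fun k => j < k)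
        (fun k => ((j : ℝ) - (k : ℝ)))).symm
      have hfil : e.filter (fun k => j < k) = Finset.Ioc j m := by
        ext k
        simp only [he, hs, Finset.mem_filter, Finset.mem_erase, Finset.mem_Icc, Finset.mem_Ioc]
        omega
      have hcard1 : (e.filter (fun k => j < k)).card = m - j := by
        rw [hfil, Nat.card_Ioc]
      have hneg : ∏ k ∈ e.filter (fun k => j < k), ((j : ℝ) - (k : ℝ))
          = (-1 : ℝ) ^ (m - j) * ∏ k ∈ e.filter (fun k => j < k), ((k : ℝ) - (j : ℝ)) := by
        rw [← hcard1, ← Finset.prod_const, ← Finset.prod_mul_distrib]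
        exact Finset.prod_congr rfl fun k _ => by ring
      have hpos1 : 0 < ∏ k ∈ e.filter (fun k => j < k), ((k : ℝ) - (j : ℝ)) := by
        refine Finset.prod_pos fun k hk => ?_
        have := (Finset.mem_filter.mp hk).2
        have : (j : ℝ) < (k : ℝ) := by exact_mod_cast this
        linarith
      have hpos2 : 0 < ∏ k ∈ e.filter (fun k => ¬ j < k), ((j : ℝ) - (k : ℝ)) := by
        refine Finset.prod_pos fun k hk => ?_
        obtain ⟨hke, hkj⟩ := Finset.mem_filter.mp hk
        have hklt : k < j := lt_of_le_of_ne (not_lt.mp hkj) (Finset.ne_of_mem_erase hke)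
        have : (k : ℝ) < (j : ℝ) := by exact_mod_cast hklt
        linarith
      have hone : (-1 : ℝ) ^ (m - j) * (-1 : ℝ) ^ (m - j) = 1 := by
        rw [← pow_add]
        exact Even.neg_one_pow ⟨m - j, rfl⟩
      rw [hD, hsplit, hneg]
      nlinarith [mul_pos hpos1 hpos2, hone]
    have hDinvsign : 0 < (-1 : ℝ) ^ (m - j) * D⁻¹ := by
      have h1 : ((-1 : ℝ) ^ (m - j) * D)⁻¹ = (-1 : ℝ) ^ (m - j) * D⁻¹ := by
        rw [mul_inv, ← inv_pow]
        norm_num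
      rw [← h1]
      exact inv_pos.mpr hDsign
    -- assemble
    have hc : (Lagrange.basis s v j).coeff α = D⁻¹ * ((-1 : ℝ) ^ (m - 1 - α) * S) := by
      rw [hbasis, Polynomial.coeff_C_mul, hcoeffprod, ← Finset.prod_inv_distrib]
    show 0 < (-1 : ℝ) ^ (j + α + 1) * (Lagrange.basis s v j).coeff α
    rw [hc]
    have hexp : (-1 : ℝ) ^ (j + α + 1) * (-1 : ℝ) ^ (m - 1 - α) = (-1 : ℝ) ^ (m - j) := by
      rw [← pow_add]
      have h1 : j + α + 1 + (m - 1 - α) = (m - j) + 2 * j := by omega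
      rw [h1, pow_add, pow_mul]
      norm_num
    calc (0:ℝ) < ((-1 : ℝ) ^ (m - j) * D⁻¹) * S := mul_pos hDinvsign hSpos
      _ = (-1 : ℝ) ^ (j + α + 1) * (D⁻¹ * ((-1 : ℝ) ^ (m - 1 - α) * S)) := by
          rw [← hexp]; ring
  · intro β hβ
    have hdeg : (Polynomial.X ^ β : ℝ[X]).degree < s.card := by
      rw [hcard, Polynomial.degree_X_pow]
      exact_mod_cast hβ
    have h1 := Lagrange.eq_interpolate (f := (Polynomial.X ^ β : ℝ[X])) hvs hdeg
    have h2 := congrArg (fun p => Polynomial.coeff p α) h1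
    simp only [Lagrange.interpolate_apply, Polynomial.finset_sum_coeff,
      Polynomial.coeff_C_mul, Polynomial.eval_pow, Polynomial.eval_X,
      Polynomial.coeff_X_pow] at h2
    have h3 : ∑ j ∈ s, (Lagrange.basis s v j).coeff α * (j : ℝ) ^ β
        = ∑ x ∈ s, v x ^ β * (Lagrange.basis s v x).coeff α :=
      Finset.sum_congr rfl fun j _ => mul_comm _ _
    show ∑ j ∈ s, (Lagrange.basis s v j).coeff α * (j : ℝ) ^ β = if β = α then 1 else 0
    rw [h3, ← h2]
    by_cases hβα : β = α
    · simp [hβα]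
    · rw [if_neg (Ne.symm hβα), if_neg hβα]

/-- Every coefficient with all exponents `< m` is nonzero. -/
lemma coeff_ne_zero_of_rep (n m : ℕ) (hm : 1 ≤ m) (P : MvPolynomial (Fin n) ℝ)
    (hdeg : ∀ i, P.degreeOf i ≤ m - 1)
    (hrep : WeakSignRepParity n (Finset.Icc 1 m) P)
    (α : Fin n → ℕ) (hα : ∀ i, α i < m) :
    MvPolynomial.coeff (Finsupp.equivFunOnFinite.symm α) P ≠ 0 := by
  classical
  choose c hsign hdual using fun i => exists_dual_weights m (α i) hm (hα i)
  set A : Finset (Fin n → ℕ) := Fintype.piFinset (fun _ : Fin n => Finset.Icc 1 m) with hA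
  set α' : Fin n →₀ ℕ := Finsupp.equivFunOnFinite.symm α with hα'
  have hα'app : ∀ i, α' i = α i := fun i => rfl
  -- membership bound on exponents in the support
  have hdm : ∀ d ∈ P.support, ∀ i, d i < m := by
    intro d hd i
    have h1 : d i ≤ P.degreeOf i := by
      rw [MvPolynomial.degreeOf_eq_sup]
      exact Finset.le_sup (f := fun d : Fin n →₀ ℕ => d i) hd
    have := hdeg i
    omega
  -- the key identity: the weighted sum of values equals the coefficient
  have key : ∑ a ∈ A, (∏ i, c i (a i)) * MvPolynomial.eval (fun i => (a i : ℝ)) P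
      = MvPolynomial.coeff α' P := by
    calc ∑ a ∈ A, (∏ i, c i (a i)) * MvPolynomial.eval (fun i => (a i : ℝ)) P
        = ∑ a ∈ A, ∑ d ∈ P.support,
            MvPolynomial.coeff d P * ∏ i, (c i (a i) * (a i : ℝ) ^ d i) := by
          refine Finset.sum_congr rfl fun a _ => ?_
          rw [MvPolynomial.eval_eq', Finset.mul_sum]
          refine Finset.sum_congr rfl fun d _ => ?_
          rw [Finset.prod_mul_distrib]
          ring
      _ = ∑ d ∈ P.support, MvPolynomial.coeff d P
            * ∏ i, ∑ j ∈ Finset.Icc 1 m, c i j * (j : ℝ) ^ d i := by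
          rw [Finset.sum_comm]
          refine Finset.sum_congr rfl fun d _ => ?_
          rw [Finset.prod_univ_sum, Finset.mul_sum]
      _ = ∑ d ∈ P.support, MvPolynomial.coeff d P * (if d = α' then 1 else 0) := by
          refine Finset.sum_congr rfl fun d hd => ?_
          congr 1
          rw [Finset.prod_congr rfl (fun i _ => hdual i (d i) (hdm d hd i)),
            Finset.prod_boole]
          congr 1
          simp only [eq_iff_iff]
          constructor
          · intro h
            ext i
            rw [hα'app i]
            exact h i (Finset.mem_univ i)
          · intro h i _
            rw [h]
            exact hα'app i
      _ = MvPolynomial.coeff α' P := by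
          simp only [mul_ite, mul_one, mul_zero]
          rw [Finset.sum_ite_eq' P.support α' (fun d => MvPolynomial.coeff d P)]
          by_cases h : α' ∈ P.support
          · rw [if_pos h]
          · rw [if_neg h, eq_comm]
            exact MvPolynomial.notMem_support_iff.mp h
  -- sign analysis
  obtain ⟨hsigns, a₀, ha₀A, ha₀⟩ := hrep
  set ε : ℝ := (-1 : ℝ) ^ (∑ i, (α i + 1)) with hε
  have hε2 : ε * ε = 1 := by
    rw [hε, ← pow_add]
    exact Even.neg_one_pow ⟨_, rfl⟩
  have hterm : ∀ a ∈ A, ∃ R : ℝ, 0 < R ∧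
      (∏ i, c i (a i)) = (-1 : ℝ) ^ (∑ i, a i) * ε * R := by
    intro a ha
    have haI : ∀ i, a i ∈ Finset.Icc 1 m := fun i => Fintype.mem_piFinset.mp ha i
    refine ⟨∏ i, ((-1 : ℝ) ^ (a i + α i + 1) * c i (a i)), Finset.prod_pos
      (fun i _ => hsign i (a i) (haI i)), ?_⟩
    have h1 : ∀ i, c i (a i) = (-1 : ℝ) ^ (a i + α i + 1)
        * ((-1 : ℝ) ^ (a i + α i + 1) * c i (a i)) := by
      intro i
      rw [← mul_assoc, ← pow_add]
      rw [Even.neg_one_pow ⟨_, rfl⟩, one_mul]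
    calc ∏ i, c i (a i)
        = ∏ i, ((-1 : ℝ) ^ (a i + α i + 1) * ((-1 : ℝ) ^ (a i + α i + 1) * c i (a i))) :=
          Finset.prod_congr rfl fun i _ => h1 i
      _ = (∏ i, (-1 : ℝ) ^ (a i + α i + 1))
            * ∏ i, ((-1 : ℝ) ^ (a i + α i + 1) * c i (a i)) := Finset.prod_mul_distrib
      _ = (-1 : ℝ) ^ (∑ i, a i) * ε
            * ∏ i, ((-1 : ℝ) ^ (a i + α i + 1) * c i (a i)) := by
          rw [Finset.prod_pow_eq_pow_sum, hε, ← pow_add, ← Finset.sum_add_distrib]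
          have hsum : ∑ i, (a i + α i + 1) = ∑ i, (a i + (α i + 1)) :=
            Finset.sum_congr rfl fun i _ => by omega
          rw [hsum]
  have hPsign : ∀ a : Fin n → ℕ, (∀ i, a i ∈ Finset.Icc 1 m) →
      0 ≤ (-1 : ℝ) ^ (∑ i, a i) * MvPolynomial.eval (fun i => (a i : ℝ)) P := by
    intro a ha
    rcases Nat.even_or_odd (∑ i, a i) with h | h
    · rw [Even.neg_one_pow h, one_mul]
      exact (hsigns a ha).1 h
    · rw [Odd.neg_one_pow h]
      have := (hsigns a ha).2 h
      linarith
  have hnn : ∀ a ∈ A, 0 ≤ ε * ((∏ i, c i (a i)) * MvPolynomial.eval (fun i => (a i : ℝ)) P) := by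
    intro a ha
    obtain ⟨R, hR, hprod⟩ := hterm a ha
    rw [hprod]
    have heq : ε * ((-1 : ℝ) ^ (∑ i, a i) * ε * R * MvPolynomial.eval (fun i => (a i : ℝ)) P)
        = (ε * ε) * (R * ((-1 : ℝ) ^ (∑ i, a i) * MvPolynomial.eval (fun i => (a i : ℝ)) P)) := by
      ring
    rw [heq, hε2, one_mul]
    exact mul_nonneg hR.le (hPsign a (fun i => Fintype.mem_piFinset.mp ha i))
  have ha₀mem : a₀ ∈ A := Fintype.mem_piFinset.mpr ha₀A
  have hstrict : 0 < ε * ((∏ i, c i (a₀ i)) * MvPolynomial.eval (fun i => (a₀ i : ℝ)) P) := by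
    obtain ⟨R, hR, hprod⟩ := hterm a₀ ha₀mem
    rw [hprod]
    have heq : ε * ((-1 : ℝ) ^ (∑ i, a₀ i) * ε * R * MvPolynomial.eval (fun i => (a₀ i : ℝ)) P)
        = (ε * ε) * (R * ((-1 : ℝ) ^ (∑ i, a₀ i) * MvPolynomial.eval (fun i => (a₀ i : ℝ)) P)) := by
      ring
    rw [heq, hε2, one_mul]
    refine mul_pos hR ?_
    refine lt_of_le_of_ne (hPsign a₀ ha₀A) ?_
    symm
    exact mul_ne_zero (pow_ne_zero _ (by norm_num)) ha₀
  have hpos : 0 < ε * MvPolynomial.coeff α' P := by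
    rw [← key, Finset.mul_sum]
    exact Finset.sum_pos' hnn ⟨a₀, ha₀mem, hstrict⟩
  intro h
  rw [hα'] at h
  rw [h, mul_zero] at hpos
  exact lt_irrefl 0 hpos

theorem weak_parity_signrep_sparsity_shifted (n m : ℕ) (hm : 1 ≤ m)
    (P : MvPolynomial (Fin n) ℝ)
    (hdeg : ∀ i, P.degreeOf i ≤ m - 1)
    (hrep : WeakSignRepParity n (Finset.Icc 1 m) P) :
    m ^ n ≤ P.support.card := by
  classical
  set B : Finset (Fin n → ℕ) := Fintype.piFinset (fun _ : Fin n => Finset.range m) with hB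
  have hmem : ∀ α ∈ B, Finsupp.equivFunOnFinite.symm α ∈ P.support := by
    intro α hα
    rw [MvPolynomial.mem_support_iff]
    exact coeff_ne_zero_of_rep n m hm P hdeg hrep α
      (fun i => Finset.mem_range.mp (Fintype.mem_piFinset.mp hα i))
  have hinj : Set.InjOn (fun α : Fin n → ℕ => Finsupp.equivFunOnFinite.symm α) B :=
    fun a _ b _ h => Finsupp.equivFunOnFinite.symm.injective h
  have hcard := Finset.card_le_card_of_injOn _ hmem hinj
  have hBcard : B.card = m ^ n := by
    rw [hB, Fintype.card_piFinset]
    simp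
  omega
end

section
/- There exists a polynomial P(X₁,...,Xₙ) that sign represents parity over {1,2}ⁿ with total degree n² and sparsity n+1. Specifically, choosing αⱼ ∈ (2^{j−1}, 2^j) for 1 ≤ j ≤ n, the polynomial P = ∏_{j=1}^n (∏_{i=1}^n Xᵢ − αⱼ) works. -/
open MvPolynomial

/-! ### Auxiliary lemmas -/

lemma parity_aux_coeff_pos (n : ℕ) (α : Fin n → ℝ) (hpos : ∀ j, 0 < α j) {m : ℕ} (hm : m ≤ n) :
    0 < (-1 : ℝ)^(n-m) * (∏ j : Fin n, (Polynomial.X - Polynomial.C (α j))).coeff m := by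
  have h1 : (∏ j : Fin n, (Polynomial.X - Polynomial.C (α j)))
      = ∏ j : Fin n, (Polynomial.X + Polynomial.C (-α j)) := by
    simp [sub_eq_add_neg]
  rw [h1, Finset.prod_X_add_C_coeff (Finset.univ : Finset (Fin n)) (fun j => -α j) (k := m)
    (by simpa using hm)]
  have h2 : ∀ t ∈ (Finset.univ : Finset (Fin n)).powersetCard
      ((Finset.univ : Finset (Fin n)).card - m),
      (∏ j ∈ t, (-α j)) = (-1:ℝ)^(n-m) * ∏ j ∈ t, α j := by
    intro t ht
    rw [Finset.mem_powersetCard] at ht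
    calc (∏ j ∈ t, (-α j)) = ∏ j ∈ t, ((-1) * α j) := by simp
      _ = (-1:ℝ)^t.card * ∏ j ∈ t, α j := by rw [Finset.prod_mul_distrib, Finset.prod_const]
      _ = (-1:ℝ)^(n-m) * ∏ j ∈ t, α j := by rw [ht.2]; simp
  rw [Finset.sum_congr rfl h2, ← Finset.mul_sum, ← mul_assoc, ← pow_add]
  have hev : Even ((n-m) + (n-m)) := Even.add_self _
  rw [hev.neg_one_pow, one_mul]
  apply Finset.sum_pos
  · intro t ht; exact Finset.prod_pos fun j _ => hpos j
  · exact Finset.powersetCard_nonempty_of_le (by simp [hm])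

lemma parity_aux_e_apply (n m : ℕ) (i : Fin n) :
    (Finsupp.equivFunOnFinite.symm (fun _ => m) : Fin n →₀ ℕ) i = m := rfl

lemma parity_aux_Y_pow (n m : ℕ) :
    ((∏ i : Fin n, X i : MvPolynomial (Fin n) ℝ)) ^ m
      = monomial (Finsupp.equivFunOnFinite.symm (fun _ => m)) 1 := by
  have hY : (∏ i : Fin n, X i : MvPolynomial (Fin n) ℝ)
      = monomial (Finsupp.equivFunOnFinite.symm (fun _ => 1)) 1 := by
    rw [← prod_X_pow_eq_monomial]
    have hsupp : (Finsupp.equivFunOnFinite.symm (fun _ => (1:ℕ)) : Fin n →₀ ℕ).support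
        = Finset.univ := by
      ext i; simp [Finsupp.mem_support_iff, parity_aux_e_apply]
    rw [hsupp]
    exact Finset.prod_congr rfl fun i _ => by rw [parity_aux_e_apply, pow_one]
  rw [hY, monomial_pow, one_pow]
  have : m • (Finsupp.equivFunOnFinite.symm (fun _ => (1:ℕ)) : Fin n →₀ ℕ)
      = Finsupp.equivFunOnFinite.symm (fun _ => m) := by
    ext i; simp [parity_aux_e_apply, Finsupp.smul_apply]
  rw [this]

lemma parity_aux_P_eq (n : ℕ) (α : Fin n → ℝ) :
    (∏ j : Fin n, ((∏ i : Fin n, X i) - C (α j)) : MvPolynomial (Fin n) ℝ)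
      = ∑ m ∈ Finset.range (n+1),
          monomial (Finsupp.equivFunOnFinite.symm (fun _ => m))
            ((∏ j : Fin n, (Polynomial.X - Polynomial.C (α j))).coeff m) := by
  set q : Polynomial ℝ := ∏ j : Fin n, (Polynomial.X - Polynomial.C (α j)) with hq
  set Y : MvPolynomial (Fin n) ℝ := ∏ i : Fin n, X i with hYdef
  have hqn : q.natDegree = n := by
    rw [hq, Polynomial.natDegree_prod]
    · simp
    · intro j _; exact Polynomial.X_sub_C_ne_zero (α j)
  have hP : (∏ j : Fin n, (Y - C (α j))) = Polynomial.aeval Y q := by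
    rw [hq, map_prod]
    refine Finset.prod_congr rfl fun j _ => ?_
    simp [algebraMap_eq]
  rw [hP, Polynomial.aeval_eq_sum_range, hqn]
  refine Finset.sum_congr rfl fun m _ => ?_
  rw [parity_aux_Y_pow, smul_monomial, smul_eq_mul, mul_one]

lemma parity_aux_sign_prod (n : ℕ) (α : Fin n → ℝ)
    (hα : ∀ j : Fin n, α j ∈ Set.Ioo ((2 : ℝ) ^ (j : ℕ)) ((2 : ℝ) ^ ((j : ℕ) + 1)))
    (k : ℕ) (hkn : k ≤ n) :
    (Even (n + k) → 0 < ∏ j : Fin n, ((2:ℝ) ^ k - α j)) ∧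
    (Odd (n + k) → ∏ j : Fin n, ((2:ℝ) ^ k - α j) < 0) := by
  set s : Finset (Fin n) := Finset.univ.filter (fun j => (j : ℕ) < k) with hs
  have hcard : s.card = k := by
    rw [show k = (Finset.range k).card from (Finset.card_range k).symm]
    refine Finset.card_bij (fun j _ => (j : ℕ)) ?_ ?_ ?_
    · intro j hj
      rw [hs, Finset.mem_filter] at hj
      simpa using hj.2
    · intro j _ j' _ h; exact Fin.val_injective h
    · intro x hx
      rw [Finset.mem_range] at hx
      exact ⟨⟨x, lt_of_lt_of_le hx hkn⟩, by simp [hs, hx], rfl⟩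
  have hcardc : (Finset.univ.filter (fun j : Fin n => ¬ (j : ℕ) < k)).card = n - k := by
    have := Finset.card_filter_add_card_filter_not (s := (Finset.univ : Finset (Fin n)))
      (p := fun j => (j : ℕ) < k)
    simp only [Finset.card_univ, Fintype.card_fin] at this
    have h' := hcard
    rw [hs] at h'
    omega
  have hpos : ∀ j ∈ s, 0 < (2:ℝ) ^ k - α j := by
    intro j hj
    rw [hs, Finset.mem_filter] at hj
    have h1 : α j < (2:ℝ) ^ ((j:ℕ)+1) := (hα j).2
    have h2 : (2:ℝ) ^ ((j:ℕ)+1) ≤ 2 ^ k := pow_le_pow_right₀ one_le_two hj.2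
    linarith
  have hneg : ∀ j ∈ Finset.univ.filter (fun j : Fin n => ¬ (j : ℕ) < k),
      (2:ℝ) ^ k - α j < 0 := by
    intro j hj
    rw [Finset.mem_filter] at hj
    have h1 : (2:ℝ) ^ (j:ℕ) < α j := (hα j).1
    have h2 : (2:ℝ) ^ k ≤ 2 ^ (j:ℕ) := pow_le_pow_right₀ one_le_two (by omega)
    linarith
  have hsplit : (∏ j : Fin n, ((2:ℝ) ^ k - α j))
      = (∏ j ∈ s, ((2:ℝ) ^ k - α j)) *
        ∏ j ∈ Finset.univ.filter (fun j : Fin n => ¬ (j : ℕ) < k), ((2:ℝ) ^ k - α j) :=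
    (Finset.prod_filter_mul_prod_filter_not Finset.univ _ _).symm
  have h1 : 0 < ∏ j ∈ s, ((2:ℝ) ^ k - α j) := Finset.prod_pos hpos
  have h2 : (∏ j ∈ Finset.univ.filter (fun j : Fin n => ¬ (j : ℕ) < k), ((2:ℝ) ^ k - α j))
      = (-1:ℝ) ^ (n - k) *
        ∏ j ∈ Finset.univ.filter (fun j : Fin n => ¬ (j : ℕ) < k), (α j - (2:ℝ) ^ k) := by
    rw [← hcardc, ← Finset.prod_const, ← Finset.prod_mul_distrib]
    exact Finset.prod_congr rfl fun j _ => by ring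
  have h3 : 0 < ∏ j ∈ Finset.univ.filter (fun j : Fin n => ¬ (j : ℕ) < k),
      (α j - (2:ℝ) ^ k) :=
    Finset.prod_pos fun j hj => by have := hneg j hj; linarith
  constructor
  · intro hev
    have : Even (n - k) := by
      rw [Nat.even_sub hkn]; rw [Nat.even_add] at hev; exact hev
    rw [hsplit, h2, this.neg_one_pow, one_mul]
    exact mul_pos h1 h3
  · intro hod
    have : Odd (n - k) := by
      rw [Nat.odd_sub hkn]; rw [Nat.odd_add] at hod; exact hod
    rw [hsplit, h2, this.neg_one_pow]
    nlinarith

/-- For `α j ∈ (2^j, 2^(j+1))` (for `j = 0, ..., n-1`, i.e. `α_{j+1} ∈ (2^j, 2^{j+1})` in the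
paper's 1-based indexing), the polynomial `∏_j (∏_i X i - α j)` sign represents parity over
`{1,2}^n`, has total degree `n²` and sparsity `n + 1`. -/
theorem parity_signrep_upper_bound_12 (n : ℕ) (α : Fin n → ℝ)
    (hα : ∀ j : Fin n, α j ∈ Set.Ioo ((2 : ℝ) ^ (j : ℕ)) ((2 : ℝ) ^ ((j : ℕ) + 1))) :
    SignRepParity n {1, 2} (∏ j : Fin n, ((∏ i : Fin n, X i) - C (α j))) ∧
    (∏ j : Fin n, ((∏ i : Fin n, X i) - C (α j))).totalDegree = n ^ 2 ∧
    (∏ j : Fin n, ((∏ i : Fin n, X i) - C (α j))).support.card = n + 1 := by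
  have hαpos : ∀ j, 0 < α j := fun j => lt_trans (by positivity) (hα j).1
  set q : Polynomial ℝ := ∏ j : Fin n, (Polynomial.X - Polynomial.C (α j)) with hq
  set e : ℕ → (Fin n →₀ ℕ) := fun m => Finsupp.equivFunOnFinite.symm (fun _ => m) with he
  have hc : ∀ m ≤ n, q.coeff m ≠ 0 := by
    intro m hm hzero
    have := parity_aux_coeff_pos n α hαpos hm
    rw [← hq, hzero, mul_zero] at this
    exact lt_irrefl 0 this
  have hinj : ∀ m ≤ n, ∀ m' ≤ n, e m = e m' → m = m' := by
    intro m hm m' hm' h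
    rcases Nat.eq_zero_or_pos n with hn | hn
    · omega
    · have := congrArg (fun f => f ⟨0, hn⟩) h
      simpa [he, parity_aux_e_apply] using this
  have hPeq := parity_aux_P_eq n α
  rw [← hq] at hPeq
  -- coefficients of P
  have hcoeff : ∀ d : Fin n →₀ ℕ,
      MvPolynomial.coeff d (∏ j : Fin n, ((∏ i : Fin n, X i) - C (α j)))
        = ∑ m ∈ Finset.range (n+1), if e m = d then q.coeff m else 0 := by
    intro d
    rw [hPeq, MvPolynomial.coeff_sum]
    exact Finset.sum_congr rfl fun m _ => MvPolynomial.coeff_monomial d (e m) _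
  have hcoeff_e : ∀ m ≤ n,
      MvPolynomial.coeff (e m) (∏ j : Fin n, ((∏ i : Fin n, X i) - C (α j))) = q.coeff m := by
    intro m hm
    rw [hcoeff]
    rw [Finset.sum_eq_single m]
    · simp
    · intro m' hm' hne
      rw [Finset.mem_range] at hm'
      rw [if_neg]
      intro h
      exact hne (hinj m' (by omega) m hm h)
    · intro h; exact absurd (Finset.mem_range.mpr (by omega)) h
  have hsupp : (∏ j : Fin n, ((∏ i : Fin n, X i) - C (α j))).support
      = (Finset.range (n+1)).image e := by
    ext d
    simp only [MvPolynomial.mem_support_iff, Finset.mem_image, Finset.mem_range]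
    constructor
    · intro hd
      by_contra hcon
      push_neg at hcon
      apply hd
      rw [hcoeff]
      refine Finset.sum_eq_zero fun m hm => ?_
      rw [Finset.mem_range] at hm
      rw [if_neg fun h => hcon m hm h]
    · rintro ⟨m, hm, rfl⟩
      rw [hcoeff_e m (by omega)]
      exact hc m (by omega)
  refine ⟨?_, ?_, ?_⟩
  · -- sign representation
    intro a ha
    set k := (Finset.univ.filter fun i => a i = 2).card with hk
    have hkn : k ≤ n := le_trans (Finset.card_filter_le _ _) (by simp)
    have hcompl : (Finset.univ.filter fun i : Fin n => ¬ a i = 2).card = n - k := by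
      have := Finset.card_filter_add_card_filter_not (s := (Finset.univ : Finset (Fin n)))
        (p := fun i => a i = 2)
      simp only [Finset.card_univ, Fintype.card_fin] at this
      omega
    have ha1 : ∀ i, ¬ a i = 2 → a i = 1 := by
      intro i hi
      have := ha i
      simp only [Finset.mem_insert, Finset.mem_singleton] at this
      tauto
    have hsum : ∑ i, a i = n + k := by
      rw [← Finset.prod_filter_mul_prod_filter_not Finset.univ (fun i => a i = 2)] at *
      rw [← Finset.sum_filter_add_sum_filter_not Finset.univ (fun i => a i = 2)]
      have e1 : ∑ i ∈ Finset.univ.filter (fun i : Fin n => a i = 2), a i = 2 * k := by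
        rw [Finset.sum_congr rfl (fun i hi => (Finset.mem_filter.mp hi).2)]
        simp [hk, mul_comm]
      have e2 : ∑ i ∈ Finset.univ.filter (fun i : Fin n => ¬ a i = 2), a i = n - k := by
        rw [Finset.sum_congr rfl (fun i hi => ha1 i (Finset.mem_filter.mp hi).2)]
        simp [hcompl]
      rw [e1, e2]; omega
    have hprod : (∏ i, (a i : ℝ)) = 2 ^ k := by
      rw [← Finset.prod_filter_mul_prod_filter_not Finset.univ (fun i => a i = 2)]
      have e1 : ∏ i ∈ Finset.univ.filter (fun i : Fin n => a i = 2), (a i : ℝ) = 2 ^ k := by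
        rw [Finset.prod_congr rfl (fun i hi => by
          rw [(Finset.mem_filter.mp hi).2])]
        simp [hk]
      have e2 : ∏ i ∈ Finset.univ.filter (fun i : Fin n => ¬ a i = 2), (a i : ℝ) = 1 := by
        rw [Finset.prod_congr rfl (fun i hi => by
          rw [ha1 i (Finset.mem_filter.mp hi).2])]
        simp
      rw [e1, e2, mul_one]
    have heval : MvPolynomial.eval (fun i => (a i : ℝ))
        (∏ j : Fin n, ((∏ i : Fin n, X i) - C (α j)))
        = ∏ j : Fin n, ((2:ℝ) ^ k - α j) := by
      rw [map_prod]
      refine Finset.prod_congr rfl fun j _ => ?_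
      rw [map_sub, map_prod]
      simp [hprod]
    rw [heval, hsum]
    exact parity_aux_sign_prod n α hα k hkn
  · -- total degree
    have hle : (∏ j : Fin n, ((∏ i : Fin n, X i) - C (α j))).totalDegree ≤ n ^ 2 := by
      refine le_trans (MvPolynomial.totalDegree_finset_prod _ _) ?_
      have hfac : ∀ j : Fin n,
          ((∏ i : Fin n, X i : MvPolynomial (Fin n) ℝ) - C (α j)).totalDegree ≤ n := by
        intro j
        refine le_trans (MvPolynomial.totalDegree_sub _ _) ?_
        simp only [MvPolynomial.totalDegree_C, max_le_iff]
        constructor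
        · refine le_trans (MvPolynomial.totalDegree_finset_prod _ _) ?_
          simp [MvPolynomial.totalDegree_X]
        · exact Nat.zero_le n
      refine le_trans (Finset.sum_le_sum (g := fun _ => n) fun j _ => hfac j) ?_
      simp [sq]
    have hge : n ^ 2 ≤ (∏ j : Fin n, ((∏ i : Fin n, X i) - C (α j))).totalDegree := by
      have hmem : e n ∈ (∏ j : Fin n, ((∏ i : Fin n, X i) - C (α j))).support := by
        rw [MvPolynomial.mem_support_iff, hcoeff_e n le_rfl]
        exact hc n le_rfl
      have := MvPolynomial.le_totalDegree hmem
      have hsum : ((e n).sum fun _ k => k) = n ^ 2 := by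
        rw [Finsupp.sum_fintype _ _ (fun _ => rfl)]
        simp [he, parity_aux_e_apply, sq]
      omega
    omega
  · -- sparsity
    rw [hsupp, Finset.card_image_of_injOn, Finset.card_range]
    intro m hm m' hm' h
    rw [Finset.coe_range, Set.mem_Iio] at hm hm'
    exact hinj m (by omega) m' (by omega) h
end

section
/- Any polynomial that sign represents parity over {1,...,m}ⁿ has sparsity at least n(m−1) + 1. In particular, any polynomial sign representing parity over {1,2}ⁿ has sparsity at least n+1. -/
/-!
Suppose `P` has at most `n (m - 1)` monomials. Distribute them among the `n` coordinates so that
each coordinate `i` receives at most `m - 1` of them. For each `i` there are weights `w i` on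
`{1, …, m}` with alternating signs that annihilate `t ↦ t ^ α i` for every monomial `x ^ α`
assigned to `i`: a nonzero annihilator exists by counting dimensions, and its consecutive entries
have opposite signs by Descartes' rule of signs. The product weight `a ↦ ∏ i, w i (a i)` has the
sign of `(-1) ^ ∑ i, a i`, so its pairing with `P` over the box is positive. Expanding `P` into
monomials, each monomial is killed by the weights of its coordinate, so the pairing vanishes.
-/

open MvPolynomial

open Finset

theorem Finset.exists_ne_zero_sum_mul_eq_zero_of_card_lt {K ι κ : Type*} [Field K]
    (s : Finset ι) (t : Finset κ) (a : κ → ι → K) (h : #t < #s) :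
    ∃ x : ι → K, (∃ i ∈ s, x i ≠ 0) ∧ ∀ k ∈ t, ∑ i ∈ s, a k i * x i = 0 := by
  classical
  have hdep : ¬ LinearIndependent K (fun i : s => fun k : t => a k i) := fun hli => by
    have := hli.fintype_card_le_finrank
    simp only [Fintype.card_coe, Module.finrank_fintype_fun_eq_card] at this
    omega
  obtain ⟨g, hg, i, hi⟩ := Fintype.not_linearIndependent_iff.mp hdep
  refine ⟨fun i => if h : i ∈ s then g ⟨i, h⟩ else 0, ⟨i, i.2, by simpa using hi⟩, fun k hk => ?_⟩
  rw [← sum_attach]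
  simpa [mul_comm] using congrFun hg ⟨k, hk⟩

namespace Polynomial

theorem signVariations_le_card_support_sub_one {R : Type*} [Semiring R] [LinearOrder R]
    (P : R[X]) : P.signVariations ≤ #P.support - 1 := by
  induction hk : #P.support generalizing P with
  | zero => simp [card_support_eq_zero.mp hk]
  | succ k ih =>
    rcases k with _ | k
    · obtain ⟨d, c, rfl⟩ := card_support_le_one_iff_monomial.mp hk.le
      simp
    · have := ih P.eraseLead (by rw [card_support_eraseLead, hk]; rfl)
      have := signVariations_le_eraseLead_succ P
      omega

variable {K : Type*}

theorem card_lt_card_support_of_forall_pos_isRoot [CommRing K] [LinearOrder K]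
    [IsStrictOrderedRing K] {P : K[X]} (hP : P ≠ 0) {S : Finset K}
    (hS : ∀ x ∈ S, 0 < x ∧ P.IsRoot x) : #S < #P.support := by
  have hsub : S.val ≤ P.roots.filter (0 < ·) :=
    (Multiset.le_iff_subset S.nodup).mpr fun x hx =>
      Multiset.mem_filter.mpr ⟨(mem_roots hP).mpr (hS x hx).2, (hS x hx).1⟩
  have hpos : 0 < #P.support := card_pos.mpr (support_nonempty.mpr hP)
  calc #S ≤ P.roots.countP (0 < ·) := by
        rw [Multiset.countP_eq_card_filter]; exact Multiset.card_le_card hsub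
    _ ≤ P.signVariations := roots_countP_pos_le_signVariations P
    _ < #P.support := by have := signVariations_le_card_support_sub_one P; omega

theorem eval_mul_eval_pos_of_forall_pos_isRoot {P : ℝ[X]} (hP : P ≠ 0) {S : Finset ℝ}
    (hS : ∀ x ∈ S, 0 < x ∧ P.IsRoot x) (hcard : #P.support ≤ #S + 1) {a b : ℝ} (ha : 0 < a)
    (hab : a ≤ b) (hSab : ∀ x ∈ S, x ∉ Set.Icc a b) : 0 < P.eval a * P.eval b := by
  by_contra! h
  obtain ⟨ξ, hξ, hξ0⟩ : ∃ ξ ∈ Set.Icc a b, P.eval ξ = 0 := by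
    have h0 : (0 : ℝ) ∈ Set.uIcc (P.eval a) (P.eval b) := by
      rcases mul_nonpos_iff.mp h with h' | h'
      exacts [Set.mem_uIcc.mpr (.inr ⟨h'.2, h'.1⟩), Set.mem_uIcc.mpr (.inl h')]
    simpa [Set.uIcc_of_le hab] using intermediate_value_uIcc P.continuous.continuousOn h0
  have := card_lt_card_support_of_forall_pos_isRoot hP (S := insert ξ S) <| by
    simp only [mem_insert, forall_eq_or_imp]
    exact ⟨⟨ha.trans_le hξ.1, hξ0⟩, hS⟩
  rw [card_insert_of_notMem fun h => hSab ξ h hξ] at this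
  omega

section Field

variable [Field K]

theorem eval_eq_sum_of_support_subset {p : K[X]} {A : Finset ℕ} (hp : p.support ⊆ A) (x : K) :
    p.eval x = ∑ α ∈ A, p.coeff α * x ^ α := by
  rw [eval_eq_sum, sum_eq_of_subset _ (by simp) hp]

theorem exists_ne_zero_support_subset_isRoot_of_card_lt (A : Finset ℕ) (S : Finset K)
    (h : #S < #A) : ∃ p : K[X], p ≠ 0 ∧ p.support ⊆ A ∧ ∀ x ∈ S, p.IsRoot x := by
  classical
  obtain ⟨c, ⟨α, hα, hcα⟩, hc⟩ := exists_ne_zero_sum_mul_eq_zero_of_card_lt A S (· ^ ·) h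
  have hcoeff : ∀ β, (∑ α ∈ A, C (c α) * X ^ α).coeff β = if β ∈ A then c β else 0 := by
    simp
  refine ⟨∑ α ∈ A, C (c α) * X ^ α, fun h0 => hcα ?_, fun β hβ => ?_, fun x hx => ?_⟩
  · simpa [hα, h0, eq_comm] using hcoeff α
  · by_contra hβA
    simp [hcoeff, hβA] at hβ
  · rw [IsRoot.def, eval_finsetSum, ← hc x hx]
    exact sum_congr rfl fun α _ => by rw [eval_mul, eval_C, eval_pow, eval_X, mul_comm]

theorem exists_sum_mul_eval_eq_zero_of_card_lt {ι : Type*} (A : Finset ℕ) (T : Finset ι)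
    (x : ι → K) (h : #A < #T) : ∃ w : ι → K, (∃ t ∈ T, w t ≠ 0) ∧
      ∀ p : K[X], p.support ⊆ A → ∑ t ∈ T, w t * p.eval (x t) = 0 := by
  obtain ⟨w, hw0, hw⟩ := exists_ne_zero_sum_mul_eq_zero_of_card_lt T A (fun α t => x t ^ α) h
  refine ⟨w, hw0, fun p hp => ?_⟩
  simp_rw [eval_eq_sum_of_support_subset hp, mul_sum]
  rw [sum_comm]
  refine sum_eq_zero fun α hα => ?_
  simp_rw [mul_left_comm (w _), ← mul_sum, mul_comm (w _), hw α hα, mul_zero]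

end Field

end Polynomial

theorem exists_pos_eq_mul_of_forall_exists_pos_eq_mul_succ {σ : ℕ → ℝ} {a b : ℕ}
    (h : ∀ t, a ≤ t → t < b → ∃ r > 0, σ t = r * σ (t + 1)) :
    ∀ t ∈ Icc a b, ∃ r > 0, σ a = r * σ t := by
  intro t ht
  obtain ⟨hat, htb⟩ := mem_Icc.mp ht
  clear ht
  induction t, hat using Nat.le_induction with
  | base => exact ⟨1, one_pos, (one_mul _).symm⟩
  | succ t hat ih =>
    obtain ⟨r, hr, hσr⟩ := ih (by omega)
    obtain ⟨s, hs, hσs⟩ := h t hat (by omega)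
    exact ⟨r * s, mul_pos hr hs, by rw [hσr, hσs, mul_assoc]⟩

open Polynomial in
/-- Pair `w` with a nonzero `p` supported in `A` that vanishes at the `m - 2` nodes other than
`t, t + 1`: `p` has no further positive root by Descartes' rule, so `p t` and `p (t + 1)` have
the same sign, while `w t * p t + w (t + 1) * p (t + 1) = 0`. -/
theorem exists_pos_eq_neg_mul_succ_of_sum_mul_eval_eq_zero {m : ℕ} {A : Finset ℕ}
    (hA : #A = m - 1) {w : ℕ → ℝ}
    (hw : ∀ p : ℝ[X], p.support ⊆ A → ∑ t ∈ Icc 1 m, w t * p.eval (t : ℝ) = 0)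
    {t : ℕ} (ht : 1 ≤ t) (htm : t < m) : ∃ r > 0, w t = -(r * w (t + 1)) := by
  set S : Finset ℕ := ((Icc 1 m).erase t).erase (t + 1)
  have hS : #S + 2 = m := by
    rw [card_erase_of_mem (by simp; omega), card_erase_of_mem (by simp; omega), Nat.card_Icc]
    omega
  obtain ⟨p, hp0, hpA, hpS⟩ := exists_ne_zero_support_subset_isRoot_of_card_lt A
    (S.image ((↑) : ℕ → ℝ)) (by rw [card_image_of_injective _ Nat.cast_injective]; omega)
  have hpos : 0 < p.eval (t : ℝ) * p.eval ((t + 1 : ℕ) : ℝ) := by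
    refine eval_mul_eval_pos_of_forall_pos_isRoot hp0 (fun x hx => ⟨?_, hpS x hx⟩) ?_
      (by positivity) (by simp) ?_
    · obtain ⟨s, hs, rfl⟩ := mem_image.mp hx
      have : 1 ≤ s := (mem_Icc.mp (mem_of_mem_erase (mem_of_mem_erase hs))).1
      positivity
    · rw [card_image_of_injective _ Nat.cast_injective]
      exact (card_le_card hpA).trans (by omega)
    · simp only [mem_image, Set.mem_Icc]
      rintro _ ⟨s, hs, rfl⟩ ⟨h1, h2⟩
      have : t ≤ s := by exact_mod_cast h1
      have : s ≤ t + 1 := by exact_mod_cast h2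
      simp only [S, mem_erase] at hs
      omega
  have hsum := hw p hpA
  rw [← add_sum_erase _ _ (mem_Icc.mpr ⟨ht, htm.le⟩),
    ← add_sum_erase _ _ (mem_erase.mpr ⟨by omega, mem_Icc.mpr ⟨by omega, htm⟩⟩),
    sum_eq_zero fun s hs => by rw [(hpS s (mem_image_of_mem _ hs)).eq_zero, mul_zero]] at hsum
  have hpt : p.eval (t : ℝ) ≠ 0 := left_ne_zero_of_mul hpos.ne'
  refine ⟨p.eval (t : ℝ) * p.eval ((t + 1 : ℕ) : ℝ) / p.eval (t : ℝ) ^ 2, by positivity, ?_⟩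
  have key : w t * p.eval (t : ℝ) = -(w (t + 1) * p.eval ((t + 1 : ℕ) : ℝ)) := by
    simp only [add_zero] at hsum
    linarith
  calc w t = w t * p.eval (t : ℝ) * p.eval (t : ℝ) / p.eval (t : ℝ) ^ 2 := by field_simp
    _ = _ := by rw [key]; ring

theorem exists_alternating_weights {m : ℕ} (hm : 1 ≤ m) {A : Finset ℕ} (hA : #A ≤ m - 1) :
    ∃ w : ℕ → ℝ, (∀ t ∈ Icc 1 m, 0 < (-1) ^ t * w t) ∧
      ∀ α ∈ A, ∑ t ∈ Icc 1 m, w t * (t : ℝ) ^ α = 0 := by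
  obtain ⟨A', hAA', hA'⟩ := Infinite.exists_superset_card_eq A (m - 1) hA
  obtain ⟨w, ⟨t₀, ht₀, hwt₀⟩, hw⟩ :=
    Polynomial.exists_sum_mul_eval_eq_zero_of_card_lt A' (Icc 1 m) ((↑) : ℕ → ℝ) (by simp; omega)
  set σ : ℕ → ℝ := fun t => (-1) ^ t * w t
  have hσ : ∀ t ∈ Icc 1 m, ∃ r > 0, σ 1 = r * σ t := by
    refine exists_pos_eq_mul_of_forall_exists_pos_eq_mul_succ fun t ht htm => ?_
    obtain ⟨r, hr, hwr⟩ := exists_pos_eq_neg_mul_succ_of_sum_mul_eval_eq_zero hA' hw ht htm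
    exact ⟨r, hr, by simp only [σ, hwr, pow_succ]; ring⟩
  have hσ₁ : σ 1 ≠ 0 := by
    obtain ⟨r, hr, h⟩ := hσ t₀ ht₀
    rw [h]
    exact mul_ne_zero hr.ne' (mul_ne_zero (pow_ne_zero _ (by norm_num)) hwt₀)
  refine ⟨fun t => σ 1 * w t, fun t ht => ?_, fun α hα => ?_⟩
  · obtain ⟨r, hr, h⟩ := hσ t ht
    have hσt : σ t ≠ 0 := fun h0 => hσ₁ (by rw [h, h0, mul_zero])
    calc 0 < r * σ t ^ 2 := by positivity
      _ = (-1) ^ t * (σ 1 * w t) := by rw [h]; ring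
  · have := hw (Polynomial.X ^ α) (by simpa using hAA' hα)
    simp only [Polynomial.eval_pow, Polynomial.eval_X] at this
    rw [← mul_zero (σ 1), ← this, mul_sum]
    exact sum_congr rfl fun t _ => by ring

theorem Finset.exists_fun_card_fiber_le_of_card_le_mul {β : Type*} (S : Finset β) {n k : ℕ}
    (h : #S ≤ n * k) : ∃ f : S → Fin n, ∀ i, #{x | f x = i} ≤ k := by
  obtain ⟨e⟩ : Nonempty (S ↪ Fin n × Fin k) :=
    Function.Embedding.nonempty_of_card_le (by simpa using h)
  refine ⟨fun x => (e x).1, fun i => ?_⟩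
  calc #{x | (e x).1 = i} ≤ #(univ : Finset (Fin k)) :=
        card_le_card_of_injOn (fun x => (e x).2) (fun _ _ => mem_univ _)
          fun x hx y hy hxy => e.injective (Prod.ext (by simp_all) hxy)
    _ = k := by simp

section BoxSum

variable {σ : Type*} [Fintype σ] [DecidableEq σ]

noncomputable def boxSum (A : Finset ℕ) (w : σ → ℕ → ℝ) (P : MvPolynomial σ ℝ) : ℝ :=
  ∑ a ∈ Fintype.piFinset fun _ => A, (∏ i, w i (a i)) * eval (fun i => (a i : ℝ)) P

theorem boxSum_eq_sum_coeff (A : Finset ℕ) (w : σ → ℕ → ℝ) (P : MvPolynomial σ ℝ) :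
    boxSum A w P = ∑ α ∈ P.support, coeff α P * ∏ i, ∑ t ∈ A, w i t * (t : ℝ) ^ α i := by
  simp only [boxSum, eval_eq', mul_sum]
  rw [sum_comm]
  refine sum_congr rfl fun α _ => ?_
  rw [prod_univ_sum, mul_sum]
  refine sum_congr rfl fun a _ => ?_
  rw [prod_mul_distrib]
  ring

end BoxSum

theorem SignRepParity.neg_one_pow_mul_eval_pos {n : ℕ} {A : Finset ℕ}
    {P : MvPolynomial (Fin n) ℝ} (hP : SignRepParity n A P) {a : Fin n → ℕ}
    (ha : ∀ i, a i ∈ A) : 0 < (-1) ^ (∑ i, a i) * eval (fun i => (a i : ℝ)) P := by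
  rcases Nat.even_or_odd (∑ i, a i) with h | h
  · simpa [h.neg_one_pow] using (hP a ha).1 h
  · simpa [h.neg_one_pow] using (hP a ha).2 h

theorem SignRepParity.boxSum_pos {n : ℕ} {A : Finset ℕ} {P : MvPolynomial (Fin n) ℝ}
    (hP : SignRepParity n A P) (hA : A.Nonempty) {w : Fin n → ℕ → ℝ}
    (hw : ∀ i, ∀ t ∈ A, 0 < (-1) ^ t * w i t) : 0 < boxSum A w P := by
  refine sum_pos (fun a ha => ?_) (Fintype.piFinset_nonempty.mpr fun _ => hA)
  have ha : ∀ i, a i ∈ A := Fintype.mem_piFinset.mp ha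
  have hsq : ((-1 : ℝ) ^ (∑ i, a i)) ^ 2 = 1 := by
    rw [← pow_mul]
    exact Even.neg_one_pow ⟨_, by ring⟩
  calc 0 < (∏ i, (-1) ^ a i * w i (a i)) * ((-1) ^ (∑ i, a i) * eval (fun i => (a i : ℝ)) P) :=
        mul_pos (prod_pos fun i _ => hw i (a i) (ha i)) (hP.neg_one_pow_mul_eval_pos ha)
    _ = (∏ i, w i (a i)) * eval (fun i => (a i : ℝ)) P := by
        rw [prod_mul_distrib, prod_pow_eq_pow_sum]
        linear_combination (∏ i, w i (a i)) * eval (fun i => (a i : ℝ)) P * hsq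

theorem parity_signrep_general_sparsity_lower (n m : ℕ) (hm : 1 ≤ m)
    (P : MvPolynomial (Fin n) ℝ)
    (hrep : SignRepParity n (Finset.Icc 1 m) P) :
    n * (m - 1) + 1 ≤ P.support.card := by
  by_contra! hsparse
  obtain ⟨f, hf⟩ :=
    P.support.exists_fun_card_fiber_le_of_card_le_mul (n := n) (k := m - 1) (by omega)
  let A i : Finset ℕ := image (fun α : P.support => (α : Fin n →₀ ℕ) i) {α | f α = i}
  choose w hw_sign hw_zero using fun i =>
    exists_alternating_weights hm (card_image_le.trans (hf i) : #(A i) ≤ m - 1)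
  have hpos : 0 < boxSum (Icc 1 m) w P := hrep.boxSum_pos ⟨1, by simp [hm]⟩ hw_sign
  have hzero : boxSum (Icc 1 m) w P = 0 := by
    rw [boxSum_eq_sum_coeff]
    refine sum_eq_zero fun α hα => mul_eq_zero_of_right _ ?_
    exact prod_eq_zero (mem_univ (f ⟨α, hα⟩)) (hw_zero _ _ (mem_image.mpr ⟨⟨α, hα⟩, by simp, rfl⟩))
  exact hpos.ne' hzero
end

section
/- Every Threshold-of-Ands circuit computing the parity function on {0,1}ⁿ has at least (3/2)ⁿ AND gates. Equivalently, every multilinear polynomial P sign representing parity over {0,1}ⁿ requires at least (3/2)ⁿ terms when written as a linear combination of polynomials of the form ∏_{i∈I}Xᵢ·∏_{j∈J}(1−Xⱼ) with I ∩ J = ∅. -/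
open Finset

/-- Evaluation of an AND gate. -/
private def gval {N : ℕ} (I J : Finset (Fin N)) (x : Fin N → ℝ) : ℝ :=
  (∏ j ∈ I, x j) * ∏ j ∈ J, (1 - x j)

private lemma gval_congr {N : ℕ} {I J : Finset (Fin N)} {x y : Fin N → ℝ}
    (h : ∀ j ∈ I ∪ J, x j = y j) : gval I J x = gval I J y := by
  unfold gval
  rw [Finset.prod_congr rfl (fun j hj => h j (mem_union_left _ hj)),
    Finset.prod_congr rfl (fun j (hj : j ∈ J) => by rw [h j (mem_union_right _ hj)])]

private lemma aux_bound {N k : ℕ} (S : Finset (Fin N)) :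
    ∀ (T : Finset (Fin k)) (c : Fin k → ℝ) (I J : Fin k → Finset (Fin N)),
    (∀ i ∈ T, Disjoint (I i) (J i)) →
    (∀ i ∈ T, I i ∪ J i ⊆ S) →
    (∀ x : Fin N → ℝ, (∀ j, x j = 0 ∨ x j = 1) →
      0 < (∏ j ∈ S, (1 - 2 * x j)) * ∑ i ∈ T, c i * gval (I i) (J i) x) →
    ((3:ℝ)/2) ^ S.card ≤ (T.card : ℝ) := by
  induction S using Finset.induction_on with
  | empty =>
      intro T c I J _ _ hx
      have h := hx (fun _ => 0) (fun _ => Or.inl rfl)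
      simp only [Finset.prod_empty, one_mul] at h
      have hT : T.Nonempty := by
        by_contra hne
        rw [Finset.not_nonempty_iff_eq_empty] at hne
        simp [hne] at h
      simp only [Finset.card_empty, pow_zero]
      exact_mod_cast Finset.card_pos.mpr hT
  | @insert a S' ha ih =>
      intro T c I J hdisj hsub hx
      classical
      set TA := T.filter (fun i => a ∈ I i) with hTAdef
      set TB := T.filter (fun i => a ∈ J i) with hTBdef
      have hTAT : TA ⊆ T := Finset.filter_subset _ _
      have hTBT : TB ⊆ T := Finset.filter_subset _ _
      have hABdisj : Disjoint TA TB := by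
        rw [Finset.disjoint_left]
        intro i hiA hiB
        have h1 := Finset.mem_filter.mp hiA
        have h2 := Finset.mem_filter.mp hiB
        exact (Finset.disjoint_left.mp (hdisj i h1.1)) h1.2 h2.2
      -- for i ∈ T \ TA, a ∉ I i
      have hnotI : ∀ i ∈ T \ TA, a ∉ I i := by
        intro i hi
        have := Finset.mem_sdiff.mp hi
        intro haI
        exact this.2 (Finset.mem_filter.mpr ⟨this.1, haI⟩)
      have hnotJ : ∀ i ∈ T \ TB, a ∉ J i := by
        intro i hi
        have := Finset.mem_sdiff.mp hi
        intro haJ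
        exact this.2 (Finset.mem_filter.mpr ⟨this.1, haJ⟩)
      -- Claim A : restriction x_a = 0
      have claimA : ∀ y : Fin N → ℝ, y a = 0 →
          ∑ i ∈ T, c i * gval (I i) (J i) y
            = ∑ i ∈ T \ TA, c i * gval (I i) ((J i).erase a) y := by
        intro y hy
        rw [← Finset.sum_filter_add_sum_filter_not T (fun i => a ∈ I i), Finset.filter_not]
        have h1 : ∑ i ∈ T.filter (fun i => a ∈ I i), c i * gval (I i) (J i) y = 0 := by
          apply Finset.sum_eq_zero
          intro i hi
          have haI : a ∈ I i := (Finset.mem_filter.mp hi).2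
          unfold gval
          rw [Finset.prod_eq_zero haI hy, zero_mul, mul_zero]
        rw [h1, zero_add]
        apply Finset.sum_congr rfl
        intro i hi
        congr 1
        by_cases haJ : a ∈ J i
        · unfold gval
          rw [← Finset.mul_prod_erase (J i) (fun j => 1 - y j) haJ, hy]
          ring
        · rw [Finset.erase_eq_of_notMem haJ]
      -- Claim B : restriction x_a = 1
      have claimB : ∀ y : Fin N → ℝ, y a = 1 →
          ∑ i ∈ T, c i * gval (I i) (J i) y
            = ∑ i ∈ T \ TB, c i * gval ((I i).erase a) (J i) y := by
        intro y hy
        rw [← Finset.sum_filter_add_sum_filter_not T (fun i => a ∈ J i), Finset.filter_not]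
        have h1 : ∑ i ∈ T.filter (fun i => a ∈ J i), c i * gval (I i) (J i) y = 0 := by
          apply Finset.sum_eq_zero
          intro i hi
          have haJ : a ∈ J i := (Finset.mem_filter.mp hi).2
          unfold gval
          rw [Finset.prod_eq_zero haJ (show (1:ℝ) - y a = 0 by rw [hy]; ring), mul_zero, mul_zero]
        rw [h1, zero_add]
        apply Finset.sum_congr rfl
        intro i hi
        congr 1
        by_cases haI : a ∈ I i
        · unfold gval
          rw [← Finset.mul_prod_erase (I i) y haI, hy, one_mul]
        · rw [Finset.erase_eq_of_notMem haI]
      -- facts about update points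
      have hupd01 : ∀ (y : Fin N → ℝ) (v : ℝ), (∀ j, y j = 0 ∨ y j = 1) → (v = 0 ∨ v = 1) →
          ∀ j, Function.update y a v j = 0 ∨ Function.update y a v j = 1 := by
        intro y v hy hv j
        by_cases hja : j = a
        · subst hja; rw [Function.update_self]; exact hv
        · rw [Function.update_of_ne hja]; exact hy j
      have hprodS' : ∀ (y : Fin N → ℝ) (v : ℝ),
          ∏ j ∈ S', (1 - 2 * Function.update y a v j) = ∏ j ∈ S', (1 - 2 * y j) := by
        intro y v
        apply Finset.prod_congr rfl
        intro j hj
        rw [Function.update_of_ne (by rintro rfl; exact ha hj)]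
      -- restricted sign representations
      have hres0 : ∀ y : Fin N → ℝ, (∀ j, y j = 0 ∨ y j = 1) →
          0 < (∏ j ∈ S', (1 - 2 * y j)) *
            ∑ i ∈ T \ TA, c i * gval (I i) ((J i).erase a) y := by
        intro y hy
        have h := hx (Function.update y a 0) (hupd01 y 0 hy (Or.inl rfl))
        rw [Finset.prod_insert ha, claimA _ (Function.update_self a 0 y),
          Function.update_self, hprodS' y 0] at h
        have hsum0 : ∑ i ∈ T \ TA, c i * gval (I i) ((J i).erase a) (Function.update y a 0)
            = ∑ i ∈ T \ TA, c i * gval (I i) ((J i).erase a) y := by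
          apply Finset.sum_congr rfl
          intro i hi
          congr 1
          apply gval_congr
          intro j hj
          apply Function.update_of_ne
          rintro rfl
          rcases Finset.mem_union.mp hj with hjI | hjJ
          · exact hnotI i hi hjI
          · exact Finset.notMem_erase j _ hjJ
        rw [hsum0] at h
        norm_num at h
        exact h
      have hres1 : ∀ y : Fin N → ℝ, (∀ j, y j = 0 ∨ y j = 1) →
          (∏ j ∈ S', (1 - 2 * y j)) *
            (∑ i ∈ T \ TB, c i * gval ((I i).erase a) (J i) y) < 0 := by
        intro y hy
        have h := hx (Function.update y a 1) (hupd01 y 1 hy (Or.inr rfl))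
        rw [Finset.prod_insert ha, claimB _ (Function.update_self a 1 y),
          Function.update_self, hprodS' y 1] at h
        have hsum1 : ∑ i ∈ T \ TB, c i * gval ((I i).erase a) (J i) (Function.update y a 1)
            = ∑ i ∈ T \ TB, c i * gval ((I i).erase a) (J i) y := by
          apply Finset.sum_congr rfl
          intro i hi
          congr 1
          apply gval_congr
          intro j hj
          apply Function.update_of_ne
          rintro rfl
          rcases Finset.mem_union.mp hj with hjI | hjJ
          · exact Finset.notMem_erase j _ hjI
          · exact hnotJ i hi hjJ
        rw [hsum1] at h
        nlinarith [h]
      -- three applications of the induction hypothesis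
      have key0 : ((3:ℝ)/2) ^ S'.card ≤ ((T \ TA).card : ℝ) := by
        apply ih (T \ TA) c I (fun i => (J i).erase a)
        · intro i hi
          exact Finset.disjoint_of_subset_right (Finset.erase_subset _ _)
            (hdisj i (Finset.mem_sdiff.mp hi).1)
        · intro i hi j hj
          have hiT : i ∈ T := (Finset.mem_sdiff.mp hi).1
          have hja : j ≠ a := by
            rintro rfl
            rcases Finset.mem_union.mp hj with hjI | hjJ
            · exact hnotI i hi hjI
            · exact Finset.notMem_erase j _ hjJ
          have : j ∈ insert a S' := hsub i hiT (by
            rcases Finset.mem_union.mp hj with hjI | hjJ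
            · exact Finset.mem_union_left _ hjI
            · exact Finset.mem_union_right _ (Finset.mem_of_mem_erase hjJ))
          exact (Finset.mem_insert.mp this).resolve_left hja
        · exact hres0
      have key1 : ((3:ℝ)/2) ^ S'.card ≤ ((T \ TB).card : ℝ) := by
        apply ih (T \ TB) (fun i => -c i) (fun i => (I i).erase a) J
        · intro i hi
          exact Finset.disjoint_of_subset_left (Finset.erase_subset _ _)
            (hdisj i (Finset.mem_sdiff.mp hi).1)
        · intro i hi j hj
          have hiT : i ∈ T := (Finset.mem_sdiff.mp hi).1
          have hja : j ≠ a := by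
            rintro rfl
            rcases Finset.mem_union.mp hj with hjI | hjJ
            · exact Finset.notMem_erase j _ hjI
            · exact hnotJ i hi hjJ
          have : j ∈ insert a S' := hsub i hiT (by
            rcases Finset.mem_union.mp hj with hjI | hjJ
            · exact Finset.mem_union_left _ (Finset.mem_of_mem_erase hjI)
            · exact Finset.mem_union_right _ hjJ)
          exact (Finset.mem_insert.mp this).resolve_left hja
        · intro y hy
          have h := hres1 y hy
          have hs : ∑ i ∈ T \ TB, (fun i => -c i) i * gval ((I i).erase a) (J i) y
              = -(∑ i ∈ T \ TB, c i * gval ((I i).erase a) (J i) y) := by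
            rw [← Finset.sum_neg_distrib]
            exact Finset.sum_congr rfl (fun i _ => neg_mul _ _)
          rw [hs]
          nlinarith [h]
      have key2 : ((3:ℝ)/2) ^ S'.card ≤ ((TA ∪ TB).card : ℝ) := by
        apply ih (TA ∪ TB) (fun i => if a ∈ I i then -c i else c i)
          (fun i => (I i).erase a) (fun i => (J i).erase a)
        · intro i hi
          exact Finset.disjoint_of_subset_left (Finset.erase_subset _ _)
            (Finset.disjoint_of_subset_right (Finset.erase_subset _ _)
              (hdisj i (by
                rcases Finset.mem_union.mp hi with h' | h'
                · exact hTAT h'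
                · exact hTBT h')))
        · intro i hi j hj
          have hiT : i ∈ T := by
            rcases Finset.mem_union.mp hi with h' | h'
            · exact hTAT h'
            · exact hTBT h'
          have hja : j ≠ a := by
            rintro rfl
            rcases Finset.mem_union.mp hj with hjI | hjJ
            · exact Finset.notMem_erase j _ hjI
            · exact Finset.notMem_erase j _ hjJ
          have : j ∈ insert a S' := hsub i hiT (by
            rcases Finset.mem_union.mp hj with hjI | hjJ
            · exact Finset.mem_union_left _ (Finset.mem_of_mem_erase hjI)
            · exact Finset.mem_union_right _ (Finset.mem_of_mem_erase hjJ))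
          exact (Finset.mem_insert.mp this).resolve_left hja
        · intro y hy
          have h0 := hres0 y hy
          have h1 := hres1 y hy
          have hTBsub : TB ⊆ T \ TA := Finset.subset_sdiff.mpr ⟨hTBT, hABdisj.symm⟩
          have hTAsub : TA ⊆ T \ TB := Finset.subset_sdiff.mpr ⟨hTAT, hABdisj⟩
          have e0 : ∑ i ∈ (T \ TA) \ TB, (c i * gval (I i) ((J i).erase a) y)
                + ∑ i ∈ TB, (c i * gval (I i) ((J i).erase a) y)
              = ∑ i ∈ T \ TA, c i * gval (I i) ((J i).erase a) y :=
            Finset.sum_sdiff hTBsub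
          have e1 : ∑ i ∈ (T \ TB) \ TA, (c i * gval ((I i).erase a) (J i) y)
                + ∑ i ∈ TA, (c i * gval ((I i).erase a) (J i) y)
              = ∑ i ∈ T \ TB, c i * gval ((I i).erase a) (J i) y :=
            Finset.sum_sdiff hTAsub
          have ecomm : (T \ TA) \ TB = (T \ TB) \ TA := sdiff_sdiff_comm
          have ecommon : ∑ i ∈ (T \ TA) \ TB, (c i * gval (I i) ((J i).erase a) y)
              = ∑ i ∈ (T \ TB) \ TA, (c i * gval ((I i).erase a) (J i) y) := by
            rw [← ecomm]
            apply Finset.sum_congr rfl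
            intro i hi
            have hiA : i ∈ T \ TA := (Finset.mem_sdiff.mp hi).1
            have hiB : i ∈ T \ TB := by
              rw [ecomm] at hi
              exact (Finset.mem_sdiff.mp hi).1
            rw [Finset.erase_eq_of_notMem (hnotJ i hiB),
              Finset.erase_eq_of_notMem (hnotI i hiA)]
          have esplit : ∑ i ∈ TA ∪ TB,
                (if a ∈ I i then -c i else c i) * gval ((I i).erase a) ((J i).erase a) y
              = ∑ i ∈ TA, ((if a ∈ I i then -c i else c i) * gval ((I i).erase a) ((J i).erase a) y)
                + ∑ i ∈ TB, ((if a ∈ I i then -c i else c i) * gval ((I i).erase a) ((J i).erase a) y) :=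
            Finset.sum_union hABdisj
          have eTA : ∑ i ∈ TA, ((if a ∈ I i then -c i else c i) * gval ((I i).erase a) ((J i).erase a) y)
              = -∑ i ∈ TA, (c i * gval ((I i).erase a) (J i) y) := by
            rw [← Finset.sum_neg_distrib]
            apply Finset.sum_congr rfl
            intro i hi
            have hiT : i ∈ T := hTAT hi
            have haI : a ∈ I i := (Finset.mem_filter.mp hi).2
            have haJ : a ∉ J i := Finset.disjoint_left.mp (hdisj i hiT) haI
            rw [if_pos haI, Finset.erase_eq_of_notMem haJ, neg_mul]
          have eTB : ∑ i ∈ TB, ((if a ∈ I i then -c i else c i) * gval ((I i).erase a) ((J i).erase a) y)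
              = ∑ i ∈ TB, (c i * gval (I i) ((J i).erase a) y) := by
            apply Finset.sum_congr rfl
            intro i hi
            have hiT : i ∈ T := hTBT hi
            have haJ : a ∈ J i := (Finset.mem_filter.mp hi).2
            have haI : a ∉ I i := Finset.disjoint_right.mp (hdisj i hiT) haJ
            rw [if_neg haI, Finset.erase_eq_of_notMem haI]
          have hdiff : ∑ i ∈ TA ∪ TB,
                (if a ∈ I i then -c i else c i) * gval ((I i).erase a) ((J i).erase a) y
              = (∑ i ∈ T \ TA, c i * gval (I i) ((J i).erase a) y)
                - (∑ i ∈ T \ TB, c i * gval ((I i).erase a) (J i) y) := by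
            rw [esplit, eTA, eTB]
            linarith [e0, e1, ecommon]
          rw [hdiff]
          nlinarith [h0, h1]
      -- counting
      have c1 : ((T \ TA).card : ℝ) + (TA.card : ℝ) = (T.card : ℝ) := by
        exact_mod_cast Finset.card_sdiff_add_card_eq_card hTAT
      have c2 : ((T \ TB).card : ℝ) + (TB.card : ℝ) = (T.card : ℝ) := by
        exact_mod_cast Finset.card_sdiff_add_card_eq_card hTBT
      have c3 : ((TA ∪ TB).card : ℝ) = (TA.card : ℝ) + (TB.card : ℝ) := by
        exact_mod_cast Finset.card_union_of_disjoint hABdisj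
      rw [Finset.card_insert_of_notMem ha, pow_succ]
      linarith [key0, key1, key2, c1, c2, c3]

open MvPolynomial

/-- The basis `𝓑ₙ` of AND-gate polynomials: `∏_{i∈I} Xᵢ ∏_{j∈J} (1 - Xⱼ)` with `I ∩ J = ∅`. -/
def IsAndGatePoly (n : ℕ) (B : MvPolynomial (Fin n) ℝ) : Prop :=
  ∃ I J : Finset (Fin n), Disjoint I J ∧
    B = (∏ i ∈ I, X i) * (∏ j ∈ J, (1 - X j))

theorem threshold_of_ands_parity_lower_bound (n k : ℕ) (P : MvPolynomial (Fin n) ℝ)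
    (hrep : SignRepParity n {0, 1} P)
    (c : Fin k → ℝ) (B : Fin k → MvPolynomial (Fin n) ℝ)
    (hB : ∀ i, IsAndGatePoly n (B i))
    (hdec : P = ∑ i, c i • B i) :
    ((3 : ℝ) / 2) ^ n ≤ (k : ℝ) := by
  choose Iset Jset hdisj hBeq using hB
  have main := aux_bound (N := n) (k := k) Finset.univ Finset.univ c Iset Jset
    (fun i _ => hdisj i) (fun i _ => Finset.subset_univ _) ?_
  · simpa using main
  · intro x hx01
    set aN : Fin n → ℕ := fun j => if x j = 1 then 1 else 0 with haN
    have hxa : ∀ j, (aN j : ℝ) = x j := by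
      intro j
      rcases hx01 j with h | h <;> simp [aN, h]
    have hmem : ∀ j, aN j ∈ ({0, 1} : Finset ℕ) := by
      intro j
      by_cases h : x j = 1 <;> simp [aN, h]
    have hP := hrep aN hmem
    have hevalP : MvPolynomial.eval (fun j => (aN j : ℝ)) P
        = ∑ i ∈ Finset.univ, c i * gval (Iset i) (Jset i) x := by
      rw [hdec, map_sum]
      apply Finset.sum_congr rfl
      intro i _
      rw [MvPolynomial.smul_eval, hBeq i]
      unfold gval
      simp [hxa]
    have hpar : ∏ j ∈ Finset.univ, (1 - 2 * x j) = (-1 : ℝ) ^ (∑ j, aN j) := by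
      rw [← Finset.prod_pow_eq_pow_sum]
      apply Finset.prod_congr rfl
      intro j _
      rcases hx01 j with h | h <;> simp [aN, h] <;> norm_num
    rcases Nat.even_or_odd (∑ j, aN j) with he | ho
    · have hpos := hP.1 he
      rw [hpar, he.neg_one_pow, one_mul, ← hevalP]
      exact hpos
    · have hneg := hP.2 ho
      rw [hpar, ho.neg_one_pow, ← hevalP]
      linarith
end
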